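/- arXiv:nlin/0212001 — 3 statements merged into one kernel-verified Lean document; each statement's English description precedes it below -/
import Mathlib

section
/- If D is a real number with D > 1, then the sum Ω^D := Σ_{p ∈ dom U} 2^{−|p|/D} diverges to infinity. -/
open scoped ENNReal MeasureTheory

/-- Finite binary strings. -/
abbrev BStr := List Bool

/-- A set of strings is prefix-free if no element is a proper prefix of another element. -/
def PrefixFree (S : Set BStr) : Prop :=
  ∀ p ∈ S, ∀ q ∈ S, p <+: q → p = q

/-- A computer: a partial recursive function on finite binary strings
whose domain is a prefix-free set. -/
structure Computer where
  f : BStr →. BStr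
  partrec : Partrec f
  prefixFree : PrefixFree f.Dom

/-- `U` is a universal computer: for every computer `C` there is a simulation
constant `sim` such that whenever `C p` is defined there is `q` with
`U q = C p` and `|q| ≤ |p| + sim`. -/
def IsUniversal (U : Computer) : Prop :=
  ∀ C : Computer, ∃ sim : ℕ, ∀ p y : BStr, C.f p = Part.some y →
    ∃ q : BStr, U.f q = Part.some y ∧ q.length ≤ p.length + sim

/-- Kolmogorov complexity relative to a computer `U`:
minimal length of a program producing `s`. -/
noncomputable def Kc (U : Computer) (s : BStr) : ℕ :=
  sInf { k | ∃ p : BStr, U.f p = Part.some s ∧ p.length = k }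

/-- The prefix of length `n` of an infinite binary sequence. -/
def pre (α : ℕ → Bool) (n : ℕ) : BStr := (List.range n).map α

/-- A real number is computable if the base-two expansion of `D mod 1` is
generated by a total recursive function. -/
def ComputableReal (D : ℝ) : Prop :=
  ∃ f : ℕ → Bool, Computable f ∧
    Int.fract D = ∑' n : ℕ, (if f n then (1 : ℝ) else 0) / 2 ^ (n + 1)

/-- `α` is weakly Chaitin `D`-random: `∃ c, ∀ n, D·n − c ≤ H(α_n)`. -/
def WeaklyChaitinRandom (U : Computer) (D : ℝ) (α : ℕ → Bool) : Prop :=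
  ∃ c : ℝ, ∀ n : ℕ, D * n - c ≤ (Kc U (pre α n) : ℝ)

/-- `α` is Chaitin `D`-random: `H(α_n) − D·n → ∞`. -/
def ChaitinRandom (U : Computer) (D : ℝ) (α : ℕ → Bool) : Prop :=
  Filter.Tendsto (fun n : ℕ => (Kc U (pre α n) : ℝ) - D * n) Filter.atTop Filter.atTop

/-- `α` is semi `D`-random: `D ≤ liminf H(α_n)/n`. -/
def SemiRandom (U : Computer) (D : ℝ) (α : ℕ → Bool) : Prop :=
  D ≤ Filter.liminf (fun n : ℕ => (Kc U (pre α n) : ℝ) / n) Filter.atTop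

/-- `α` is `D`-compressible: `limsup H(α_n)/n ≤ D`. -/
def Compressible (U : Computer) (D : ℝ) (α : ℕ → Bool) : Prop :=
  Filter.limsup (fun n : ℕ => (Kc U (pre α n) : ℝ) / n) Filter.atTop ≤ D

/-- A Martin-Löf `D`-test: an r.e. subset `T` of `ℕ × X` with
`Σ_{s ∈ T_i} 2^{−D|s|} ≤ 2^{−i}` for every `i`. -/
def MLTest (D : ℝ) (T : Set (ℕ × BStr)) : Prop :=
  REPred (· ∈ T) ∧
    ∀ i : ℕ, (∑' s : { s : BStr // (i, s) ∈ T }, (2 : ℝ≥0∞) ^ (-(D * (s.1.length : ℝ))))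
      ≤ (2 : ℝ≥0∞) ^ (-(i : ℝ))

/-- `α` is Martin-Löf `D`-random: for every Martin-Löf `D`-test there is a
level `i` such that no prefix of `α` lies in `T_i`. -/
def MLRandom (D : ℝ) (α : ℕ → Bool) : Prop :=
  ∀ T : Set (ℕ × BStr), MLTest D T → ∃ i : ℕ, ∀ n : ℕ, (i, pre α n) ∉ T

/-- A Solovay `D`-test: an r.e. subset `T` of `ℕ × X` with
`Σ_{(i,s) ∈ T} 2^{−D|s|} < ∞`. -/
def SolovayTest (D : ℝ) (T : Set (ℕ × BStr)) : Prop :=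
  REPred (· ∈ T) ∧
    (∑' x : T, (2 : ℝ≥0∞) ^ (-(D * ((x : ℕ × BStr).2.length : ℝ)))) < ⊤

/-- `α` is Solovay `D`-random: for every Solovay `D`-test, only finitely many
levels `i` contain a prefix of `α`. -/
def SolovayRandom (D : ℝ) (α : ℕ → Bool) : Prop :=
  ∀ T : Set (ℕ × BStr), SolovayTest D T →
    ∃ m : ℕ, ∀ i > m, ∀ n : ℕ, (i, pre α n) ∉ T

/-- The generalized halting probability `Ω^D = Σ_{p ∈ dom U} 2^{−|p|/D}`. -/
noncomputable def OmegaD (U : Computer) (D : ℝ) : ℝ :=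
  ∑' p : U.f.Dom, (2 : ℝ) ^ (-((p : BStr).length : ℝ) / D)

/-- The `n`-th digit (starting from `n = 0`) of the base-two expansion of
`x mod 1`, chosen with infinitely many zeros (the non-terminating-in-ones
expansion). -/
noncomputable def binExp (x : ℝ) (n : ℕ) : Bool :=
  decide (⌊Int.fract x * 2 ^ (n + 1)⌋ % 2 = 1)

/-- `code_N(x)`: the infinite binary sequence obtained by interleaving the
base-two expansions (with infinitely many zeros) of the fractional parts of
the `N` coordinates of `x`. -/
noncomputable def codeSeq (N : ℕ) (hN : 0 < N) (x : EuclideanSpace ℝ (Fin N)) (n : ℕ) : Bool :=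
  binExp (x ⟨n % N, Nat.mod_lt n hN⟩) (n / N)

/-- `D` is the 1st algorithmic dimension of `F ⊆ ℝ^N`. -/
def IsDimA1 (U : Computer) (N : ℕ) (hN : 0 < N) (F : Set (EuclideanSpace ℝ (Fin N)))
    (D : ℝ) : Prop :=
  (∀ x ∈ F, Compressible U (D / N) (codeSeq N hN x)) ∧
    ∃ x ∈ F, ChaitinRandom U (D / N) (codeSeq N hN x)

/-- `D` is the 2nd algorithmic dimension of `F ⊆ ℝ^N`. -/
def IsDimA2 (U : Computer) (N : ℕ) (hN : 0 < N) (F : Set (EuclideanSpace ℝ (Fin N)))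
    (D : ℝ) : Prop :=
  (∀ x ∈ F, Compressible U (D / N) (codeSeq N hN x)) ∧
    ∃ x ∈ F, WeaklyChaitinRandom U (D / N) (codeSeq N hN x)

/-- `D` is the 3rd algorithmic dimension of `F ⊆ ℝ^N`. -/
def IsDimA3 (U : Computer) (N : ℕ) (hN : 0 < N) (F : Set (EuclideanSpace ℝ (Fin N)))
    (D : ℝ) : Prop :=
  (∀ x ∈ F, Compressible U (D / N) (codeSeq N hN x)) ∧
    ∃ x ∈ F, SemiRandom U (D / N) (codeSeq N hN x)

/-- `D` is the 4th algorithmic dimension of `F ⊆ ℝ^N`. -/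
def IsDimA4 (U : Computer) (N : ℕ) (hN : 0 < N) (F : Set (EuclideanSpace ℝ (Fin N)))
    (D : ℝ) : Prop :=
  (∀ x ∈ F, Compressible U (D / N) (codeSeq N hN x)) ∧
    ∀ d : ℝ, d < D / N → ∃ x ∈ F, ChaitinRandom U d (codeSeq N hN x)

/-- One-dimensional versions of the algorithmic dimensions, for `F ⊆ ℝ`,
where a real `x` is identified with the base-two expansion of `x mod 1`. -/
def IsDimA1R (U : Computer) (F : Set ℝ) (D : ℝ) : Prop :=
  (∀ x ∈ F, Compressible U D (binExp x)) ∧ ∃ x ∈ F, ChaitinRandom U D (binExp x)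

def IsDimA2R (U : Computer) (F : Set ℝ) (D : ℝ) : Prop :=
  (∀ x ∈ F, Compressible U D (binExp x)) ∧ ∃ x ∈ F, WeaklyChaitinRandom U D (binExp x)

def IsDimA3R (U : Computer) (F : Set ℝ) (D : ℝ) : Prop :=
  (∀ x ∈ F, Compressible U D (binExp x)) ∧ ∃ x ∈ F, SemiRandom U D (binExp x)

def IsDimA4R (U : Computer) (F : Set ℝ) (D : ℝ) : Prop :=
  (∀ x ∈ F, Compressible U D (binExp x)) ∧
    ∀ d : ℝ, d < D → ∃ x ∈ F, ChaitinRandom U d (binExp x)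

/-- The real number `0.s` determined by a finite binary string `s`. -/
noncomputable def strVal : BStr → ℝ
  | [] => 0
  | b :: t => ((if b then 1 else 0) + strVal t) / 2

/-- The real number `0.q₀q₁q₂⋯` obtained by concatenating the strings
`q 0, q 1, q 2, …` after the binary point. -/
noncomputable def concatVal (q : ℕ → BStr) : ℝ :=
  ∑' i : ℕ, strVal (q i) * (2 : ℝ) ^ (-(∑ j ∈ Finset.range i, (q j).length : ℤ))

/-- The halting self-similar set `F_halt`. -/
def Fhalt (U : Computer) : Set ℝ :=
  { x | ∃ q : ℕ → BStr, (∀ i, q i ∈ U.f.Dom) ∧ x = concatVal q }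

/-- The set `F_opt(f, W)` for an optimal code `f`. -/
def Fopt (f : BStr → BStr) (W : Set BStr) : Set ℝ :=
  { x | ∃ s : ℕ → BStr, (∀ i, s i ∈ W) ∧ x = concatVal fun i => f (s i) }

/-- The set `F_halt(W)`. -/
def FhaltW (U : Computer) (W : Set BStr) : Set ℝ :=
  { x | ∃ q : ℕ → BStr, (∀ i, ∃ w ∈ W, U.f (q i) = Part.some w) ∧ x = concatVal q }

/-- The dyadic interval `I(s) = [0.s, 0.s + 2^{−|s|})`. -/
def Ival (s : BStr) : Set ℝ :=
  Set.Ico (strVal s) (strVal s + 2 ^ (-(s.length : ℤ)))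

/-- The enlarged interval `Î(s) = [0.s − 2^{−|s|}, 0.s + 2·2^{−|s|}) mod 1`. -/
def IvalHat (s : BStr) : Set ℝ :=
  Int.fract '' Set.Ico (strVal s - 2 ^ (-(s.length : ℤ)))
    (strVal s + 2 * 2 ^ (-(s.length : ℤ)))

/-- `𝔐(F)`: tuples of equal-length strings whose dyadic box meets `F mod 1`. -/
def MM (N : ℕ) (F : Set (EuclideanSpace ℝ (Fin N))) : Set (Fin N → BStr) :=
  { s | (∀ i j, (s i).length = (s j).length) ∧
      ∃ x ∈ F, ∀ i, Int.fract (x i) ∈ Ival (s i) }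

/-- `𝔐̂(F)`: tuples of equal-length strings whose enlarged box meets `F mod 1`. -/
def MMhat (N : ℕ) (F : Set (EuclideanSpace ℝ (Fin N))) : Set (Fin N → BStr) :=
  { s | (∀ i j, (s i).length = (s j).length) ∧
      ∃ x ∈ F, ∀ i, Int.fract (x i) ∈ IvalHat (s i) }

/-- `F` satisfies the r.e. condition: some r.e. set `L` is squeezed between
`𝔐(F)` and `𝔐̂(F)`. -/
def REcond (N : ℕ) (F : Set (EuclideanSpace ℝ (Fin N))) : Prop :=
  ∃ L : Set (Fin N → BStr), REPred (· ∈ L) ∧ MM N F ⊆ L ∧ L ⊆ MMhat N F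

/-- `N_δ(F)`: the smallest number of closed balls of radius `δ` that cover `F`. -/
noncomputable def coverNum {X : Type*} [MetricSpace X] (F : Set X) (δ : ℝ) : ℕ :=
  sInf { m | ∃ t : Finset X, t.card = m ∧ F ⊆ ⋃ c ∈ t, Metric.closedBall c δ }

/-- The upper box-counting dimension of `F`. -/
noncomputable def dimBsup {X : Type*} [MetricSpace X] (F : Set X) : ℝ :=
  Filter.limsup (fun δ : ℝ => Real.log (coverNum F δ) / (-Real.log δ)) (nhdsWithin 0 (Set.Ioi 0))

/-!
A universal computer simulates the computer that reads a string `s` of length `2ᵏ` from the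
program `0ᵏ 1 s`. So each of the `2 ^ 2ᵏ` strings of length `2ᵏ` has its own `U`-program of
length at most `2ᵏ + k + O(1)`, and `Ω^D ≥ 2 ^ 2ᵏ · 2 ^ (-(2ᵏ + k + O(1)) / D)
= 2 ^ ((1 - 1/D) 2ᵏ - O(k))`, which is unbounded in `k` when `D > 1`.
-/

open Filter Asymptotics

def decodePow2 (p : BStr) : Option BStr :=
  if p.length = p.idxOf true + 1 + 2 ^ p.idxOf true then some (p.drop (p.idxOf true + 1))
  else none

lemma primrec_decodePow2 : Primrec decodePow2 := by
  have hk : Primrec fun p : BStr => p.idxOf true :=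
    Primrec.list_idxOf.comp (Primrec.const true) Primrec.id
  have hpow : Primrec fun p : BStr => 2 ^ p.idxOf true :=
    (Primrec₂.unpaired'.1 Nat.Primrec.pow).comp (Primrec.const 2) hk
  have hlen : PrimrecPred fun p : BStr => p.length = p.idxOf true + 1 + 2 ^ p.idxOf true :=
    Primrec.eq.comp Primrec.list_length (Primrec.nat_add.comp (Primrec.succ.comp hk) hpow)
  exact Primrec.ite hlen
    (Primrec.option_some.comp (Primrec.list_drop.comp (Primrec.succ.comp hk) Primrec.id))
    (Primrec.const none)

lemma length_eq_of_decodePow2_isSome {p : BStr} (hp : (decodePow2 p).isSome) :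
    p.length = p.idxOf true + 1 + 2 ^ p.idxOf true := by
  by_contra h
  simp [decodePow2, h] at hp

lemma decodePow2_replicate_append {k : ℕ} {s : BStr} (hs : s.length = 2 ^ k) :
    decodePow2 (List.replicate k false ++ true :: s) = some s := by
  have hidx : (List.replicate k false ++ true :: s).idxOf true = k := by
    rw [List.idxOf_append_of_notMem (by simp)]
    simp
  have hsplit : List.replicate k false ++ true :: s = (List.replicate k false ++ [true]) ++ s := by
    simp
  rw [decodePow2, hidx, if_pos (by simp [hs]; omega), hsplit, List.drop_left' (by simp)]

lemma eq_nil_of_decodePow2_isSome_append {p t : BStr} (hp : (decodePow2 p).isSome)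
    (hpt : (decodePow2 (p ++ t)).isSome) : t = [] := by
  have hp_len := length_eq_of_decodePow2_isSome hp
  have hpt_len := length_eq_of_decodePow2_isSome hpt
  have hmem : true ∈ p :=
    List.idxOf_lt_length_iff.mp (by have := Nat.two_pow_pos (p.idxOf true); omega)
  rw [List.idxOf_append_of_mem hmem, List.length_append] at hpt_len
  exact List.length_eq_zero_iff.mp (by omega)

def pow2Computer : Computer where
  f p := decodePow2 p
  partrec := Computable.ofOption primrec_decodePow2.to_comp
  prefixFree := by
    rintro p hp _ hq ⟨t, rfl⟩
    rw [eq_nil_of_decodePow2_isSome_append ((Part.ofOption_dom _).mp hp)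
      ((Part.ofOption_dom _).mp hq), List.append_nil]

lemma IsUniversal.exists_program_of_length_eq_two_pow {U : Computer} (hU : IsUniversal U) :
    ∃ σ : ℕ, ∀ (k : ℕ) (s : BStr), s.length = 2 ^ k →
      ∃ q : BStr, U.f q = Part.some s ∧ q.length ≤ k + 1 + 2 ^ k + σ := by
  obtain ⟨σ, hσ⟩ := hU pow2Computer
  refine ⟨σ, fun k s hs => ?_⟩
  obtain ⟨q, hq, hq_len⟩ := hσ (List.replicate k false ++ true :: s) s
    (congrArg Part.ofOption (decodePow2_replicate_append hs))
  refine ⟨q, hq, hq_len.trans_eq ?_⟩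
  simp only [List.length_append, List.length_replicate, List.length_cons, hs]
  ring

lemma card_mul_le_tsum_dom {β ι : Type*} [Fintype ι] (f : BStr →. β) {g : ι → β}
    (hg : Function.Injective g) {L : ℕ} (hL : ∀ i, ∃ p, f p = Part.some (g i) ∧ p.length ≤ L)
    {D : ℝ} (hD : 0 ≤ D) :
    Fintype.card ι * (2 : ℝ≥0∞) ^ (-(L : ℝ) / D) ≤
      ∑' p : f.Dom, (2 : ℝ≥0∞) ^ (-((p : BStr).length : ℝ) / D) := by
  choose q hq hq_len using hL
  have hq_dom (i : ι) : q i ∈ f.Dom := (PFun.mem_dom f _).mpr ⟨g i, by simp [hq i]⟩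
  have hq_inj : Function.Injective fun i => (⟨q i, hq_dom i⟩ : f.Dom) := by
    intro i j hij
    have hqij : q i = q j := congrArg Subtype.val hij
    exact hg (Part.some_injective (by rw [← hq i, ← hq j, hqij]))
  calc Fintype.card ι * (2 : ℝ≥0∞) ^ (-(L : ℝ) / D)
      = ∑ i : ι, (2 : ℝ≥0∞) ^ (-(L : ℝ) / D) := by simp
    _ ≤ ∑ i : ι, (2 : ℝ≥0∞) ^ (-((q i).length : ℝ) / D) := by
      gcongr with i
      · exact one_le_two
      · exact_mod_cast hq_len i
    _ = ∑' i : ι, (2 : ℝ≥0∞) ^ (-((q i).length : ℝ) / D) := (tsum_fintype _).symm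
    _ ≤ _ := ENNReal.tsum_comp_le_tsum_of_injective hq_inj
      (fun p : f.Dom => (2 : ℝ≥0∞) ^ (-((p : BStr).length : ℝ) / D))

lemma tendsto_two_pow_sub_div_atTop {D : ℝ} (hD : 1 < D) (c : ℝ) :
    Tendsto (fun k : ℕ => (2 : ℝ) ^ k - (k + 2 ^ k + c) / D) atTop atTop := by
  have ha : 0 < 1 - 1 / D := by
    rw [sub_pos, div_lt_one (by linarith)]
    exact hD
  have hpow : Tendsto (fun k : ℕ => (2 : ℝ) ^ k) atTop atTop :=
    tendsto_pow_atTop_atTop_of_one_lt one_lt_two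
  have hlin : (fun k : ℕ => D⁻¹ * ((k : ℝ) + c)) =o[atTop] fun k => (1 - 1 / D) * 2 ^ k := by
    refine (IsLittleO.const_mul_left ?_ D⁻¹).const_mul_right' (isUnit_iff_ne_zero.mpr ha.ne')
    refine (isLittleO_coe_const_pow_of_one_lt one_lt_two).add
      (isLittleO_const_left.mpr (Or.inr ?_))
    exact tendsto_norm_atTop_atTop.comp hpow
  have hequiv := (IsEquivalent.refl.sub_isLittleO hlin).symm
  refine (hequiv.tendsto_atTop (hpow.const_mul_atTop ha)).congr fun k => ?_
  simp only [Pi.sub_apply]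
  ring

/-- For `D > 1`, the sum `Ω^D = Σ_{p ∈ dom U} 2^{−|p|/D}`
diverges to infinity. -/
theorem omegaD_diverges (U : Computer) (hU : IsUniversal U) (D : ℝ) (hD : 1 < D) :
    ∑' p : U.f.Dom, (2 : ℝ≥0∞) ^ (-((p : BStr).length : ℝ) / D) = ⊤ := by
  obtain ⟨σ, hσ⟩ := hU.exists_program_of_length_eq_two_pow
  have hbound (k : ℕ) : (2 : ℝ≥0∞) ^ ((2 : ℝ) ^ k - (k + 2 ^ k + (1 + σ)) / D) ≤
      ∑' p : U.f.Dom, (2 : ℝ≥0∞) ^ (-((p : BStr).length : ℝ) / D) := by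
    have h := card_mul_le_tsum_dom U.f List.ofFn_injective
      (fun v : Fin (2 ^ k) → Bool => hσ k (List.ofFn v) List.length_ofFn) (D := D) (by linarith)
    convert h using 1
    rw [Fintype.card_fun, Fintype.card_bool, Fintype.card_fin, Nat.cast_pow, Nat.cast_ofNat,
      ← ENNReal.rpow_natCast, ← ENNReal.rpow_add _ _ two_ne_zero ENNReal.ofNat_ne_top]
    congr 1
    push_cast
    ring
  have hlim := (ENNReal.tendsto_rpow_atTop_of_one_lt_base ENNReal.one_lt_two).comp
    (tendsto_two_pow_sub_div_atTop hD (1 + σ))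
  exact top_unique (le_of_tendsto' hlim hbound)
end

section
/- Let D ≥ 0 be a computable real number. Define T^1_D := { x ∈ ℝ^N : code_N(x) is not Chaitin (D/N)-random } and T^2_D := { x ∈ ℝ^N : code_N(x) is not weakly Chaitin (D/N)-random }. Then T^1_D and T^2_D are Borel sets and ℋ^D(T^1_D) = ℋ^D(T^2_D) = 0, where ℋ^D is D-dimensional Hausdorff outer measure on ℝ^N. -/
open scoped ENNReal MeasureTheory

/-!
By Kraft's inequality for the prefix-free domain of `U`, `∑ₜ 2^(-K(t)) ≤ 1`, so the strings `t`
with `K(t) < (D/N)|t| + c` satisfy `∑ 2^(-(D/N)|t|) ≤ 2^c`. A point of a unit cube whose code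
has such a prefix for infinitely many lengths lies in infinitely many of the corresponding
cylinders, whose diameters are at most `2√N · 2^(-|t|/N)`. The `D`-th powers of these diameters
are summable, so a Borel–Cantelli argument for Hausdorff measure makes the set of such points
`μH[D]`-null. A point whose code is not Chaitin `(D/N)`-random is such a point for some `c`, and
a Chaitin random sequence is weakly Chaitin random. Both sets are Borel because `K(x_n)` depends
only on finitely many binary digits, each a Borel function of `x`.
-/

open Filter Topology Metric MeasureTheory

/-- The Hausdorff-measure analogue of the Borel–Cantelli lemma
`measure_limsup_cofinite_eq_zero`. -/
theorem hausdorffMeasure_limsup_cofinite_eq_zero {X ι : Type*} [EMetricSpace X]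
    [MeasurableSpace X] [BorelSpace X] [Countable ι] {d : ℝ} {G : ι → Set X}
    (hdiam : Tendsto (fun i => ediam (G i)) cofinite (𝓝 0))
    (hsum : ∑' i, ediam (G i) ^ d ≠ ∞) :
    μH[d] (limsup G cofinite) = 0 := by
  have hr : Tendsto (fun F : Finset ι => ⨆ i : {i // i ∉ F}, ediam (G i)) atTop (𝓝 0) := by
    refine ENNReal.tendsto_nhds_zero.2 fun ε hε => ?_
    have hfin := eventually_cofinite.1 (ENNReal.tendsto_nhds_zero.1 hdiam ε hε)
    exact eventually_atTop.2 ⟨hfin.toFinset, fun F hF => iSup_le fun i =>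
      not_not.1 fun h => i.2 (hF (hfin.mem_toFinset.2 h))⟩
  have hcover (F : Finset ι) : limsup G cofinite ⊆ ⋃ i : {i // i ∉ F}, G i := fun x hx => by
    obtain ⟨i, hi, hiF⟩ := (frequently_cofinite_iff_infinite.1
      (mem_limsup_iff_frequently_mem.1 hx)).exists_notMem_finset F
    exact Set.mem_iUnion.2 ⟨⟨i, hiF⟩, hi⟩
  refine le_antisymm ?_ zero_le
  calc μH[d] (limsup G cofinite)
      ≤ liminf (fun F : Finset ι => ∑' i : {i // i ∉ F}, ediam (G i) ^ d) atTop :=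
        Measure.hausdorffMeasure_le_liminf_tsum d _ _ hr (fun F (i : {i // i ∉ F}) => G i)
          (.of_forall fun F i => le_iSup (fun i : {i // i ∉ F} => ediam (G i)) i)
          (.of_forall hcover)
    _ = 0 := (ENNReal.tendsto_tsum_compl_atTop_zero hsum).liminf_eq

lemma List.tendsto_length_cofinite {α : Type*} [Finite α] :
    Tendsto (List.length : List α → ℕ) cofinite atTop :=
  tendsto_atTop.2 fun n => eventually_cofinite.2 <|
    (List.finite_length_le α n).subset fun _ ht => le_of_not_ge ht

lemma inv_two_pow_div_le (n N : ℕ) : (2⁻¹ : ℝ≥0∞) ^ (n / N) ≤ 2 * 2 ^ (-(n / N : ℝ)) := by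
  have hfloor : (n / N : ℝ) < (n / N : ℕ) + 1 := by
    simpa [Nat.floor_div_eq_div] using Nat.lt_floor_add_one ((n : ℝ) / N)
  calc (2⁻¹ : ℝ≥0∞) ^ (n / N) = 2 ^ (-((n / N : ℕ) : ℝ)) := by
        rw [← ENNReal.rpow_natCast, ENNReal.inv_rpow, ENNReal.rpow_neg]
    _ ≤ 2 ^ (1 + -(n / N : ℝ)) := ENNReal.rpow_le_rpow_of_exponent_le (by norm_num) (by linarith)
    _ = 2 * 2 ^ (-(n / N : ℝ)) := by
        rw [ENNReal.rpow_add _ _ (by norm_num) (by norm_num), ENNReal.rpow_one]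

lemma mul_inv_two_pow_div_rpow_le (a : ℝ≥0∞) (n N : ℕ) {D : ℝ} (hD : 0 ≤ D) :
    (a * 2⁻¹ ^ (n / N)) ^ D ≤ (2 * a) ^ D * 2 ^ (-(D / N * n)) := by
  calc (a * 2⁻¹ ^ (n / N)) ^ D ≤ (2 * a * 2 ^ (-(n / N : ℝ))) ^ D := by
        rw [mul_comm 2 a, mul_assoc]
        gcongr
        exact inv_two_pow_div_le n N
    _ = (2 * a) ^ D * 2 ^ (-(D / N * n)) := by
        rw [ENNReal.mul_rpow_of_nonneg _ _ hD, ← ENNReal.rpow_mul]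
        congr 2
        ring

lemma PrefixFree.uniquelyDecodable {S : Set BStr} (hS : PrefixFree S) (hnil : [] ∉ S) :
    InformationTheory.UniquelyDecodable S := by
  intro L₁ L₂ h₁ h₂ heq
  induction L₁ generalizing L₂ with
  | nil =>
    cases L₂ with
    | nil => rfl
    | cons v L₂ =>
      obtain ⟨rfl, -⟩ := List.append_eq_nil_iff.1 (List.flatten_cons ▸ heq.symm)
      exact absurd (h₂ [] List.mem_cons_self) hnil
  | cons w L₁ ih =>
    cases L₂ with
    | nil =>
      obtain ⟨rfl, -⟩ := List.append_eq_nil_iff.1 (List.flatten_cons ▸ heq)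
      exact absurd (h₁ [] List.mem_cons_self) hnil
    | cons v L₂ =>
      rw [List.flatten_cons, List.flatten_cons] at heq
      have hw := h₁ w List.mem_cons_self
      have hv := h₂ v List.mem_cons_self
      have hwv : w = v := by
        rcases List.prefix_or_prefix_of_prefix (List.prefix_append w _)
            (heq ▸ List.prefix_append v _) with h | h
        · exact hS w hw v hv h
        · exact (hS v hv w hw h).symm
      subst hwv
      rw [ih L₂ (fun u hu => h₁ u (List.mem_cons_of_mem _ hu))
        (fun u hu => h₂ u (List.mem_cons_of_mem _ hu)) (List.append_cancel_left heq)]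

lemma PrefixFree.sum_le_one {S : Set BStr} (hS : PrefixFree S) (T : Finset BStr)
    (hT : ↑T ⊆ S) : ∑ p ∈ T, (2⁻¹ : ℝ≥0∞) ^ p.length ≤ 1 := by
  by_cases hnil : [] ∈ S
  · have hT' : T ⊆ {[]} := fun p hp => Finset.mem_singleton.2
      (hS [] hnil p (hT hp) List.nil_prefix).symm
    calc ∑ p ∈ T, (2⁻¹ : ℝ≥0∞) ^ p.length ≤ ∑ p ∈ {[]}, (2⁻¹ : ℝ≥0∞) ^ p.length :=
          Finset.sum_le_sum_of_subset hT'
      _ = 1 := by simp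
  · have hUD : InformationTheory.UniquelyDecodable (T : Set BStr) := fun L₁ L₂ h₁ h₂ =>
      (hS.uniquelyDecodable hnil) L₁ L₂ (fun w hw => hT (h₁ w hw)) (fun w hw => hT (h₂ w hw))
    have hreal := InformationTheory.kraft_mcmillan_inequality hUD
    simp only [Fintype.card_bool, Nat.cast_ofNat, one_div] at hreal
    calc ∑ p ∈ T, (2⁻¹ : ℝ≥0∞) ^ p.length = ENNReal.ofReal (∑ p ∈ T, (2⁻¹ : ℝ) ^ p.length) := by
          rw [ENNReal.ofReal_sum_of_nonneg fun p _ => by positivity]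
          simp [ENNReal.ofReal_pow, ENNReal.ofReal_inv_of_pos, ENNReal.inv_pow]
      _ ≤ 1 := ENNReal.ofReal_le_one.2 hreal

theorem PrefixFree.tsum_le_one {S : Set BStr} (hS : PrefixFree S) :
    ∑' p : S, (2⁻¹ : ℝ≥0∞) ^ (p : BStr).length ≤ 1 := by
  rw [ENNReal.tsum_eq_iSup_sum]
  refine iSup_le fun T => ?_
  have := hS.sum_le_one (T.map (Function.Embedding.subtype _))
    (by rw [Finset.coe_map]; exact Set.image_subset_iff.2 fun p _ => p.2)
  rwa [Finset.sum_map] at this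

namespace IsUniversal

variable {U : Computer}

theorem exists_program (hU : IsUniversal U) (s : BStr) : ∃ p, U.f p = Part.some s := by
  classical
  let g : BStr → Option BStr := fun p => if p = [] then some s else none
  have hg : Primrec g := Primrec.ite (PrimrecRel.comp Primrec.eq Primrec.id (Primrec.const []))
    (Primrec.const _) (Primrec.const _)
  have hdom : ∀ p, (g p : Part BStr).Dom → p = [] := fun p hp => by
    by_contra h
    simp [g, h] at hp
  let C : Computer :=
    { f := fun p => g p
      partrec := Computable.ofOption hg.to_comp
      prefixFree := fun p hp q hq _ => (hdom p hp).trans (hdom q hq).symm }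
  obtain ⟨sim, hsim⟩ := hU C
  obtain ⟨q, hq, -⟩ := hsim [] s (by simp [C, g])
  exact ⟨q, hq⟩

theorem exists_program_length_eq_Kc (hU : IsUniversal U) (s : BStr) :
    ∃ p, U.f p = Part.some s ∧ p.length = Kc U s :=
  Nat.sInf_mem (s := {k | ∃ p, U.f p = Part.some s ∧ p.length = k})
    (let ⟨p, hp⟩ := hU.exists_program s; ⟨p.length, p, hp, rfl⟩)

/-- Minimal programs of distinct strings are distinct elements of the prefix-free domain
of `U`. -/
theorem tsum_inv_two_pow_Kc_le_one (hU : IsUniversal U) :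
    ∑' s, (2⁻¹ : ℝ≥0∞) ^ Kc U s ≤ 1 := by
  choose p hp hlen using hU.exists_program_length_eq_Kc
  let φ : BStr → U.f.Dom := fun s => ⟨p s, (PFun.mem_dom _ _).2 ⟨s, (hp s).symm ▸ Part.mem_some s⟩⟩
  have hφ : Function.Injective φ := fun s t hst =>
    Part.some_injective ((hp s).symm.trans ((congrArg (U.f ∘ Subtype.val) hst).trans (hp t)))
  calc ∑' s, (2⁻¹ : ℝ≥0∞) ^ Kc U s = ∑' s, (2⁻¹ : ℝ≥0∞) ^ ((φ s : BStr).length) := by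
        simp only [φ, hlen]
    _ ≤ ∑' q : U.f.Dom, (2⁻¹ : ℝ≥0∞) ^ (q : BStr).length :=
        ENNReal.tsum_comp_le_tsum_of_injective hφ (fun q : U.f.Dom => _)
    _ ≤ 1 := U.prefixFree.tsum_le_one

theorem tsum_two_rpow_neg_le_of_Kc_lt (hU : IsUniversal U) (d c : ℝ) :
    ∑' t : {t : BStr // (Kc U t : ℝ) < d * t.length + c}, (2 : ℝ≥0∞) ^ (-(d * t.1.length))
      ≤ 2 ^ c := by
  calc ∑' t : {t : BStr // (Kc U t : ℝ) < d * t.length + c}, (2 : ℝ≥0∞) ^ (-(d * t.1.length))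
      ≤ ∑' t : {t : BStr // (Kc U t : ℝ) < d * t.length + c}, 2 ^ c * (2⁻¹ : ℝ≥0∞) ^ Kc U t := by
        refine ENNReal.tsum_le_tsum fun t => ?_
        rw [← ENNReal.rpow_natCast, ENNReal.inv_rpow, ← ENNReal.rpow_neg,
          ← ENNReal.rpow_add _ _ (by norm_num) (by norm_num)]
        exact ENNReal.rpow_le_rpow_of_exponent_le (by norm_num) (by linarith [t.2])
    _ = 2 ^ c * ∑' t : {t : BStr // (Kc U t : ℝ) < d * t.length + c}, (2⁻¹ : ℝ≥0∞) ^ Kc U t :=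
        ENNReal.tsum_mul_left
    _ ≤ 2 ^ c * 1 := by
        gcongr
        exact (ENNReal.tsum_comp_le_tsum_of_injective Subtype.val_injective
          (fun s => (2⁻¹ : ℝ≥0∞) ^ Kc U s)).trans hU.tsum_inv_two_pow_Kc_le_one
    _ = 2 ^ c := mul_one _

end IsUniversal

lemma floor_two_mul_eq (t : ℝ) : ⌊2 * t⌋ = 2 * ⌊t⌋ + ⌊2 * t⌋ % 2 := by
  have h : ⌊t⌋ = ⌊2 * t⌋ / 2 := by
    simpa using Int.floor_div_natCast (2 * t) 2
  rw [h, Int.mul_ediv_add_emod]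

lemma floor_fract_mul_two_pow_eq {x y : ℝ} {m : ℕ} (h : ∀ k < m, binExp x k = binExp y k) :
    ⌊Int.fract x * 2 ^ m⌋ = ⌊Int.fract y * 2 ^ m⌋ := by
  induction m with
  | zero => simp [Int.floor_fract]
  | succ m ih =>
    have hsplit (a : ℝ) : ⌊a * 2 ^ (m + 1)⌋ = 2 * ⌊a * 2 ^ m⌋ + ⌊a * 2 ^ (m + 1)⌋ % 2 := by
      rw [show a * 2 ^ (m + 1) = 2 * (a * 2 ^ m) by ring]
      exact floor_two_mul_eq _
    have hdigit : ⌊Int.fract x * 2 ^ (m + 1)⌋ % 2 = ⌊Int.fract y * 2 ^ (m + 1)⌋ % 2 := by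
      have hm := decide_eq_decide.1 (h m m.lt_succ_self)
      omega
    rw [hsplit, hsplit (Int.fract y), ih fun k hk => h k (hk.trans m.lt_succ_self), hdigit]

lemma abs_fract_sub_fract_lt {x y : ℝ} {m : ℕ} (h : ∀ k < m, binExp x k = binExp y k) :
    |Int.fract x - Int.fract y| < (2 ^ m)⁻¹ := by
  have h2m : (0 : ℝ) < 2 ^ m := by positivity
  have := Int.abs_sub_lt_one_of_floor_eq_floor (floor_fract_mul_two_pow_eq h)
  rwa [← sub_mul, abs_mul, abs_of_pos h2m, ← lt_div_iff₀ h2m, one_div] at this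

lemma pre_eq_pre_iff {α β : ℕ → Bool} {n : ℕ} : pre α n = pre β n ↔ ∀ j < n, α j = β j := by
  simp [pre, List.map_inj_left]

lemma codeSeq_add_mul {N : ℕ} (hN : 0 < N) (x : EuclideanSpace ℝ (Fin N)) (i : Fin N) (k : ℕ) :
    codeSeq N hN x (i + k * N) = binExp (x i) k := by
  have hmod : (i + k * N) % N = i := by rw [Nat.add_mul_mod_self_right, Nat.mod_eq_of_lt i.isLt]
  have hdiv : (i + k * N) / N = k := by
    rw [Nat.add_mul_div_right _ _ hN, Nat.div_eq_of_lt i.isLt, zero_add]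
  simp only [codeSeq, hmod, hdiv]

def codeCylinder (N : ℕ) (hN : 0 < N) (k : Fin N → ℤ) (t : BStr) :
    Set (EuclideanSpace ℝ (Fin N)) :=
  {x | (∀ i, ⌊x i⌋ = k i) ∧ pre (codeSeq N hN x) t.length = t}

/-- A prefix of length `n` of the code fixes the first `n / N` binary digits of every
coordinate. -/
lemma dist_le_of_mem_codeCylinder {N : ℕ} {hN : 0 < N} {k : Fin N → ℤ} {t : BStr}
    {x y : EuclideanSpace ℝ (Fin N)} (hx : x ∈ codeCylinder N hN k t)
    (hy : y ∈ codeCylinder N hN k t) : dist x y ≤ √N * (2 ^ (t.length / N))⁻¹ := by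
  have hcoord (i : Fin N) : dist (x i) (y i) ≤ (2 ^ (t.length / N))⁻¹ := by
    have hdigits : ∀ k < t.length / N, binExp (x i) k = binExp (y i) k := fun k hk => by
      have hlt : i + k * N < t.length := by
        have h1 : (k + 1) * N ≤ t.length / N * N := Nat.mul_le_mul_right N hk
        have h2 := Nat.div_mul_le_self t.length N
        rw [Nat.succ_mul] at h1
        omega
      rw [← codeSeq_add_mul hN, ← codeSeq_add_mul hN]
      exact pre_eq_pre_iff.1 (hx.2.trans hy.2.symm) _ hlt
    have hsub : x i - y i = Int.fract (x i) - Int.fract (y i) := by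
      rw [← Int.self_sub_floor, ← Int.self_sub_floor, hx.1 i, hy.1 i]
      ring
    rw [Real.dist_eq, hsub]
    exact (abs_fract_sub_fract_lt hdigits).le
  calc dist x y = √(∑ i, dist (x i) (y i) ^ 2) := EuclideanSpace.dist_eq x y
    _ ≤ √(∑ _i : Fin N, ((2 ^ (t.length / N))⁻¹ : ℝ) ^ 2) := by
        gcongr with i
        exact hcoord i
    _ = √N * (2 ^ (t.length / N))⁻¹ := by
        rw [Finset.sum_const, Finset.card_univ, Fintype.card_fin, nsmul_eq_mul,
          Real.sqrt_mul (Nat.cast_nonneg N), Real.sqrt_sq (by positivity)]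

lemma ediam_codeCylinder_le {N : ℕ} (hN : 0 < N) (k : Fin N → ℤ) (t : BStr) :
    ediam (codeCylinder N hN k t) ≤ ENNReal.ofReal √N * 2⁻¹ ^ (t.length / N) := by
  have hbound : ENNReal.ofReal √N * 2⁻¹ ^ (t.length / N)
      = ENNReal.ofReal (√N * (2 ^ (t.length / N))⁻¹) := by
    rw [ENNReal.ofReal_mul (Real.sqrt_nonneg _), ENNReal.ofReal_inv_of_pos (by positivity),
      ENNReal.ofReal_pow (by norm_num), ENNReal.ofReal_ofNat, ENNReal.inv_pow]
  rw [hbound]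
  exact ediam_le fun x hx y hy =>
    (edist_le_ofReal (by positivity)).2 (dist_le_of_mem_codeCylinder hx hy)

lemma measurable_codeSeq_apply {N : ℕ} (hN : 0 < N) (j : ℕ) :
    Measurable fun x : EuclideanSpace ℝ (Fin N) => codeSeq N hN x j := by
  have hbin (k : ℕ) : Measurable fun r : ℝ => binExp r k :=
    (measurable_from_top (f := fun z : ℤ => decide (z % 2 = 1))).comp
      (measurable_fract.mul_const _).floor
  exact (hbin _).comp ((measurable_pi_apply _).comp (WithLp.measurable_ofLp 2 _))

lemma measurable_comp_pre_codeSeq {β : Type*} [MeasurableSpace β] {N : ℕ} (hN : 0 < N) (n : ℕ)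
    (g : BStr → β) : Measurable fun x : EuclideanSpace ℝ (Fin N) => g (pre (codeSeq N hN x) n) := by
  have hpre (α : ℕ → Bool) : pre α n = List.ofFn fun j : Fin n => α j := by
    rw [pre, List.ofFn_eq_map, ← List.map_coe_finRange_eq_range, List.map_map]
    rfl
  simp_rw [hpre]
  exact (measurable_of_finite (g ∘ List.ofFn)).comp
    (measurable_pi_lambda _ fun j => measurable_codeSeq_apply hN j)

lemma measurableSet_setOf_chaitinRandom (U : Computer) {N : ℕ} (hN : 0 < N) (d : ℝ) :
    MeasurableSet {x : EuclideanSpace ℝ (Fin N) | ChaitinRandom U d (codeSeq N hN x)} :=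
  measurableSet_tendsto atTop fun n =>
    measurable_comp_pre_codeSeq hN n fun t => (Kc U t : ℝ) - d * n

lemma measurableSet_setOf_weaklyChaitinRandom (U : Computer) {N : ℕ} (hN : 0 < N) (d : ℝ) :
    MeasurableSet {x : EuclideanSpace ℝ (Fin N) | WeaklyChaitinRandom U d (codeSeq N hN x)} := by
  have hset : {x : EuclideanSpace ℝ (Fin N) | WeaklyChaitinRandom U d (codeSeq N hN x)} =
      {x | BddAbove (Set.range fun n : ℕ => d * n - Kc U (pre (codeSeq N hN x) n))} := by
    ext x
    simp [WeaklyChaitinRandom, bddAbove_def, add_comm]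
  rw [hset]
  exact measurableSet_bddAbove_range fun n =>
    measurable_comp_pre_codeSeq hN n fun t => d * n - (Kc U t : ℝ)

/-- The strings `t` with `K(t) < d |t| + c` satisfy `∑ 2^(-d |t|) ≤ 2^c`, and the cylinder of `t`
has diameter of order `2^(-|t| / N)`; for `d = D / N` these cylinders therefore form a
Borel–Cantelli cover for `μH[D]`. -/
theorem hausdorffMeasure_setOf_frequently_Kc_lt_eq_zero {U : Computer} (hU : IsUniversal U)
    {N : ℕ} (hN : 0 < N) {D : ℝ} (hD : 0 ≤ D) (c : ℝ) (k : Fin N → ℤ) :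
    μH[D] {x : EuclideanSpace ℝ (Fin N) | (∀ i, ⌊x i⌋ = k i) ∧
      ∃ᶠ n in atTop, (Kc U (pre (codeSeq N hN x) n) : ℝ) < D / N * n + c} = 0 := by
  let S : Set BStr := {t | (Kc U t : ℝ) < D / N * t.length + c}
  let G : S → Set (EuclideanSpace ℝ (Fin N)) := fun t => codeCylinder N hN k t
  refine measure_mono_null ?_ (hausdorffMeasure_limsup_cofinite_eq_zero (G := G) ?_ ?_)
  · rintro x ⟨hk, hfreq⟩
    rw [Nat.frequently_atTop_iff_infinite, ← Set.infinite_coe_iff] at hfreq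
    rw [mem_limsup_iff_frequently_mem, frequently_cofinite_iff_infinite, ← Set.infinite_coe_iff]
    have hlen (n : ℕ) : (pre (codeSeq N hN x) n).length = n := by simp [pre]
    refine @Infinite.of_injective _ _ hfreq (fun n => ⟨⟨pre (codeSeq N hN x) n, by
      rw [Set.mem_ofPred_eq, hlen]; exact n.2⟩, hk, by simp [hlen]⟩) fun n m h => Subtype.ext ?_
    simpa [hlen] using congrArg (fun t : {t | x ∈ G t} => t.1.1.length) h
  · have hlen : Tendsto (fun t : S => t.1.length) cofinite atTop :=
      List.tendsto_length_cofinite.comp Subtype.val_injective.tendsto_cofinite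
    have hbound := ENNReal.Tendsto.const_mul ((ENNReal.tendsto_pow_atTop_nhds_zero_of_lt_one
      (by norm_num : (2⁻¹ : ℝ≥0∞) < 1)).comp ((Nat.tendsto_div_const_atTop hN.ne').comp hlen))
      (Or.inr (ENNReal.ofReal_ne_top (r := √N)))
    rw [mul_zero] at hbound
    exact tendsto_of_tendsto_of_tendsto_of_le_of_le tendsto_const_nhds hbound
      (fun _ => zero_le) fun t => ediam_codeCylinder_le hN k t
  · refine ne_top_of_le_ne_top ?_ (ENNReal.tsum_le_tsum fun t =>
      (ENNReal.rpow_le_rpow (ediam_codeCylinder_le hN k t) hD).trans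
        (mul_inv_two_pow_div_rpow_le _ t.1.length N hD))
    rw [ENNReal.tsum_mul_left]
    refine ENNReal.mul_ne_top (ENNReal.rpow_ne_top_of_nonneg hD
      (ENNReal.mul_ne_top (by norm_num) ENNReal.ofReal_ne_top))
      (ne_top_of_le_ne_top ?_ (hU.tsum_two_rpow_neg_le_of_Kc_lt (D / N) c))
    exact ENNReal.rpow_ne_top_of_nonneg' (by norm_num) (by simp)

lemma setOf_not_chaitinRandom_subset (U : Computer) {N : ℕ} (hN : 0 < N) (d : ℝ) :
    {x : EuclideanSpace ℝ (Fin N) | ¬ ChaitinRandom U d (codeSeq N hN x)} ⊆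
      ⋃ (c : ℕ) (k : Fin N → ℤ), {x | (∀ i, ⌊x i⌋ = k i) ∧
        ∃ᶠ n in atTop, (Kc U (pre (codeSeq N hN x) n) : ℝ) < d * n + c} := by
  intro x hx
  obtain ⟨b, hb⟩ := not_forall.1 (mt Filter.tendsto_atTop.2 hx)
  refine Set.mem_iUnion₂.2 ⟨⌈b⌉₊, fun i => ⌊x i⌋, fun _ => rfl, ?_⟩
  refine (not_eventually.1 hb).mono fun n hn => ?_
  linarith [not_le.1 hn, Nat.le_ceil b]

lemma ChaitinRandom.weaklyChaitinRandom {U : Computer} {d : ℝ} {α : ℕ → Bool}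
    (h : ChaitinRandom U d α) : WeaklyChaitinRandom U d α := by
  obtain ⟨c, hc⟩ := bddBelow_range_of_tendsto_atTop_atTop h
  exact ⟨-c, fun n => by linarith [hc (Set.mem_range_self n)]⟩

theorem hausdorffMeasure_nonrandom_eq_zero_general
    (U : Computer) (hU : IsUniversal U) (N : ℕ) (hN : 0 < N)
    (D : ℝ) (hD0 : 0 ≤ D) :
    MeasurableSet {x : EuclideanSpace ℝ (Fin N) | ¬ ChaitinRandom U (D / N) (codeSeq N hN x)} ∧
    MeasurableSet {x : EuclideanSpace ℝ (Fin N) |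
      ¬ WeaklyChaitinRandom U (D / N) (codeSeq N hN x)} ∧
    μH[D] {x : EuclideanSpace ℝ (Fin N) | ¬ ChaitinRandom U (D / N) (codeSeq N hN x)} = 0 ∧
    μH[D] {x : EuclideanSpace ℝ (Fin N) |
      ¬ WeaklyChaitinRandom U (D / N) (codeSeq N hN x)} = 0 := by
  have hnull : μH[D] {x : EuclideanSpace ℝ (Fin N) |
      ¬ ChaitinRandom U (D / N) (codeSeq N hN x)} = 0 :=
    measure_mono_null (setOf_not_chaitinRandom_subset U hN _) <| measure_iUnion_null fun c =>
      measure_iUnion_null fun k => hausdorffMeasure_setOf_frequently_Kc_lt_eq_zero hU hN hD0 c k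
  exact ⟨(measurableSet_setOf_chaitinRandom U hN _).compl,
    (measurableSet_setOf_weaklyChaitinRandom U hN _).compl, hnull,
    measure_mono_null (fun _ => mt ChaitinRandom.weaklyChaitinRandom) hnull⟩

/-- For a computable real `D ≥ 0`, the sets of non Chaitin
`(D/N)`-random and non weakly Chaitin `(D/N)`-random points of `ℝ^N` are Borel
and have zero `D`-dimensional Hausdorff measure. -/
theorem hausdorffMeasure_nonrandom_eq_zero
    (U : Computer) (hU : IsUniversal U) (N : ℕ) (hN : 0 < N)
    (D : ℝ) (hD0 : 0 ≤ D) (hDc : ComputableReal D) :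
    MeasurableSet {x : EuclideanSpace ℝ (Fin N) | ¬ ChaitinRandom U (D / N) (codeSeq N hN x)} ∧
    MeasurableSet {x : EuclideanSpace ℝ (Fin N) |
      ¬ WeaklyChaitinRandom U (D / N) (codeSeq N hN x)} ∧
    μH[D] {x : EuclideanSpace ℝ (Fin N) | ¬ ChaitinRandom U (D / N) (codeSeq N hN x)} = 0 ∧
    μH[D] {x : EuclideanSpace ℝ (Fin N) |
      ¬ WeaklyChaitinRandom U (D / N) (codeSeq N hN x)} = 0 :=
  hausdorffMeasure_nonrandom_eq_zero_general U hU N hN D hD0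
end

section
/- Let S_1,…,S_m be contractions on ℝ^N, each of the affine form S_i(x) = M_i x + v_i where M_i is an N×N matrix and v_i ∈ ℝ^N. If all matrix entries of each M_i and all components of each v_i are computable real numbers, then the invariant set F of S_1,…,S_m (the unique nonempty compact set with F = ∪_{i=1}^m S_i(F)) satisfies the r.e. condition. -/
open scoped ENNReal MeasureTheory

/-!
For a word `w` of length `d`, the orbit point `w.foldr S 0` is within `r ^ d * R` of the attractor
`F`, and every point of `F` is that close to such an orbit point (`r` a common contraction ratio).
For affine maps with computable coefficients these orbit points can be computed to any precision
by fixed-point arithmetic, uniformly in `w`. A tuple of dyadic strings of length `n` is accepted as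
soon as some long enough word gives an approximate orbit point whose coordinates lie, mod 1,
within `2⁻ⁿ⁻¹` of the corresponding dyadic intervals; enumerating all words gives an r.e. set
containing `𝔐(F)` and contained in `𝔐̂(F)`.
-/

/-- The pair `(a, b)` encodes the signed dyadic rational `(a - b) / 2 ^ q`: Mathlib provides
primitive recursive arithmetic on `ℕ` but not on `ℤ`. -/
noncomputable def dyadicVal (q : ℕ) (x : ℕ × ℕ) : ℝ := ((x.1 : ℝ) - x.2) / 2 ^ q

def dyadicMul (x y : ℕ × ℕ) : ℕ × ℕ := (x.1 * y.1 + x.2 * y.2, x.1 * y.2 + x.2 * y.1)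

def dyadicShift (r : ℕ) (x : ℕ × ℕ) : ℕ × ℕ := (x.1 / 2 ^ r, x.2 / 2 ^ r)

lemma dyadicVal_add (q : ℕ) (x y : ℕ × ℕ) :
    dyadicVal q (x + y) = dyadicVal q x + dyadicVal q y := by
  simp only [dyadicVal, Prod.fst_add, Prod.snd_add]
  push_cast
  ring

lemma dyadicVal_sum {ι : Type*} (q : ℕ) (s : Finset ι) (f : ι → ℕ × ℕ) :
    dyadicVal q (∑ k ∈ s, f k) = ∑ k ∈ s, dyadicVal q (f k) :=
  map_sum (AddMonoidHom.mk' (dyadicVal q) (dyadicVal_add q)) f s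

lemma dyadicVal_dyadicMul (q r : ℕ) (x y : ℕ × ℕ) :
    dyadicVal (q + r) (dyadicMul x y) = dyadicVal q x * dyadicVal r y := by
  simp only [dyadicVal, dyadicMul, pow_add]
  push_cast
  field_simp
  ring

lemma dyadicVal_two_pow (p : ℕ) : dyadicVal p (2 ^ p, 0) = 1 := by
  simp [dyadicVal]

lemma abs_dyadicVal_dyadicShift_sub_le (q r : ℕ) (x : ℕ × ℕ) :
    |dyadicVal q (dyadicShift r x) - dyadicVal (q + r) x| ≤ 1 / 2 ^ q := by
  have herr : ∀ a : ℕ,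
      0 ≤ (a : ℝ) / 2 ^ r - (a / 2 ^ r : ℕ) ∧ (a : ℝ) / 2 ^ r - (a / 2 ^ r : ℕ) < 1 := by
    intro a
    have h := Nat.floor_div_eq_div (K := ℝ) a (2 ^ r)
    push_cast at h
    rw [← h]
    exact ⟨sub_nonneg.2 (Nat.floor_le (by positivity)),
      by linarith [Nat.lt_floor_add_one ((a : ℝ) / 2 ^ r)]⟩
  have h : dyadicVal q (dyadicShift r x) - dyadicVal (q + r) x =
      (((x.2 : ℝ) / 2 ^ r - (x.2 / 2 ^ r : ℕ)) - ((x.1 : ℝ) / 2 ^ r - (x.1 / 2 ^ r : ℕ)))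
        / 2 ^ q := by
    simp only [dyadicVal, dyadicShift, pow_add]
    field_simp
    ring
  rw [h, abs_div, abs_of_pos (by positivity : (0 : ℝ) < 2 ^ q)]
  refine div_le_div_of_nonneg_right ?_ (by positivity)
  obtain ⟨h₁, h₁'⟩ := herr x.1
  obtain ⟨h₂, h₂'⟩ := herr x.2
  exact abs_le.2 ⟨by linarith, by linarith⟩

lemma primrec_two_pow : Primrec fun p : ℕ => 2 ^ p :=
  (Primrec₂.unpaired'.1 Nat.Primrec.pow).comp (Primrec.const 2) Primrec.id

lemma primrec_prod_add : Primrec₂ ((· + ·) : ℕ × ℕ → ℕ × ℕ → ℕ × ℕ) :=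
  (Primrec.nat_add.comp (Primrec.fst.comp Primrec.fst) (Primrec.fst.comp Primrec.snd)).pair
    (Primrec.nat_add.comp (Primrec.snd.comp Primrec.fst) (Primrec.snd.comp Primrec.snd))

lemma primrec_dyadicMul : Primrec₂ dyadicMul := by
  have p11 : Primrec fun q : (ℕ × ℕ) × (ℕ × ℕ) => q.1.1 := Primrec.fst.comp Primrec.fst
  have p12 : Primrec fun q : (ℕ × ℕ) × (ℕ × ℕ) => q.1.2 := Primrec.snd.comp Primrec.fst
  have p21 : Primrec fun q : (ℕ × ℕ) × (ℕ × ℕ) => q.2.1 := Primrec.fst.comp Primrec.snd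
  have p22 : Primrec fun q : (ℕ × ℕ) × (ℕ × ℕ) => q.2.2 := Primrec.snd.comp Primrec.snd
  exact (Primrec.nat_add.comp (Primrec.nat_mul.comp p11 p21) (Primrec.nat_mul.comp p12 p22)).pair
    (Primrec.nat_add.comp (Primrec.nat_mul.comp p11 p22) (Primrec.nat_mul.comp p12 p21))

lemma primrec_dyadicShift : Primrec₂ dyadicShift :=
  (Primrec.nat_div.comp (Primrec.fst.comp Primrec.snd) (primrec_two_pow.comp Primrec.fst)).pair
    (Primrec.nat_div.comp (Primrec.snd.comp Primrec.snd) (primrec_two_pow.comp Primrec.fst))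

def binaryNum (f : ℕ → Bool) : ℕ → ℕ
  | 0 => 0
  | p + 1 => 2 * binaryNum f p + cond (f p) 1 0

lemma computable_binaryNum {f : ℕ → Bool} (hf : Computable f) : Computable (binaryNum f) := by
  have hstep : Computable₂ fun (_ : ℕ) (q : ℕ × ℕ) => 2 * q.2 + cond (f q.1) 1 0 :=
    Primrec.nat_add.to_comp.comp
      (Primrec.nat_mul.to_comp.comp (Computable.const 2) (Computable.snd.comp Computable.snd))
      (Computable.cond (hf.comp (Computable.fst.comp Computable.snd))
        (Computable.const 1) (Computable.const 0))
  refine (Computable.nat_rec Computable.id (Computable.const 0) hstep).of_eq fun p => ?_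
  induction p with
  | zero => rfl
  | succ p ih => exact congrArg (fun x => 2 * x + cond (f p) 1 0) ih

lemma binaryNum_div_two_pow (f : ℕ → Bool) (p : ℕ) :
    (binaryNum f p : ℝ) / 2 ^ p
      = ∑ t ∈ Finset.range p, (if f t then (1 : ℝ) else 0) / 2 ^ (t + 1) := by
  induction p with
  | zero => simp [binaryNum]
  | succ p ih =>
    rw [Finset.sum_range_succ, ← ih, binaryNum]
    cases f p <;> simp <;> field_simp <;> ring

lemma tsum_sub_binaryNum_div_mem_Icc (f : ℕ → Bool) (p : ℕ) :
    ∑' t, (if f t then (1 : ℝ) else 0) / 2 ^ (t + 1) - (binaryNum f p : ℝ) / 2 ^ p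
      ∈ Set.Icc 0 (1 / 2 ^ p) := by
  set b : ℕ → ℝ := fun t => (if f t then 1 else 0) / 2 ^ (t + 1)
  have hb : ∀ t, 0 ≤ b t ∧ b t ≤ 1 / 2 / 2 ^ t := fun t => by
    refine ⟨by positivity, ?_⟩
    rw [div_div, ← pow_succ']
    exact div_le_div_of_nonneg_right (by split_ifs <;> norm_num) (by positivity)
  have hsum : Summable b :=
    (summable_geometric_two' 1).of_nonneg_of_le (fun t => (hb t).1) (fun t => (hb t).2)
  rw [binaryNum_div_two_pow, ← hsum.sum_add_tsum_nat_add p, add_sub_cancel_left]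
  refine ⟨tsum_nonneg fun t => (hb _).1, ?_⟩
  calc ∑' t, b (t + p) ≤ ∑' t, 1 / 2 ^ p / 2 / 2 ^ t :=
        (hsum.comp_injective (add_left_injective p)).tsum_le_tsum (fun t => ?_)
          (summable_geometric_two' _)
    _ = 1 / 2 ^ p := tsum_geometric_two' _
  calc b (t + p) ≤ 1 / 2 / 2 ^ (t + p) := (hb _).2
    _ = 1 / 2 ^ p / 2 / 2 ^ t := by rw [pow_add]; ring

lemma ComputableReal.exists_dyadic_approx {D : ℝ} (hD : ComputableReal D) :
    ∃ a : ℕ → ℕ × ℕ, Computable a ∧ ∀ p, |D - dyadicVal p (a p)| ≤ 1 / 2 ^ p := by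
  obtain ⟨f, hf, hfract⟩ := hD
  -- `⌊D⌋` is stored as `⌊D⌋⁺ - ⌊D⌋⁻`, the fractional part by its first `p` binary digits
  refine ⟨fun p => (⌊D⌋.toNat * 2 ^ p + binaryNum f p, (-⌊D⌋).toNat * 2 ^ p), ?_, fun p => ?_⟩
  · have hpow := primrec_two_pow.to_comp
    exact (Primrec.nat_add.to_comp.comp
      (Primrec.nat_mul.to_comp.comp (Computable.const _) hpow) (computable_binaryNum hf)).pair
      (Primrec.nat_mul.to_comp.comp (Computable.const _) hpow)
  · have hval : dyadicVal p (⌊D⌋.toNat * 2 ^ p + binaryNum f p, (-⌊D⌋).toNat * 2 ^ p)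
        = ⌊D⌋ + (binaryNum f p : ℝ) / 2 ^ p := by
      have hint : ((⌊D⌋.toNat : ℤ) : ℝ) - ((-⌊D⌋).toNat : ℤ) = ⌊D⌋ := by
        exact_mod_cast Int.toNat_sub_toNat_neg ⌊D⌋
      simp only [dyadicVal]
      push_cast at hint ⊢
      rw [← hint]
      field_simp
      ring
    obtain ⟨h₀, h₁⟩ := tsum_sub_binaryNum_div_mem_Icc f p
    rw [hval, abs_of_nonneg (by linarith [Int.floor_add_fract D])]
    linarith [Int.floor_add_fract D]

namespace Computable

variable {α β σ : Type*} [Primcodable α] [Primcodable β] [Primcodable σ]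

theorem list_foldr {f : α → List β} {g : α → σ} {h : α → β × σ → σ}
    (hf : Computable f) (hg : Computable g) (hh : Computable₂ h) :
    Computable fun a => (f a).foldr (fun b s => h a (b, s)) (g a) := by
  -- fold the reversed list from the left, reading one entry per recursion step
  have hstep : Computable₂ fun a (q : ℕ × σ) =>
      ((f a).reverse[q.1]?).elim q.2 fun b => h a (b, q.2) :=
    option_casesOn (list_getElem?.comp (list_reverse.comp (hf.comp fst)) (fst.comp snd))
      (snd.comp snd) (hh.comp (fst.comp fst) (snd.pair (snd.comp (snd.comp fst)))).to₂
      |>.of_eq fun q => by dsimp only; cases (f q.1).reverse[q.2.1]? <;> rfl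
  have hiter : ∀ a k, Nat.rec (motive := fun _ => σ) (g a)
      (fun k s => ((f a).reverse[k]?).elim s fun b => h a (b, s)) k
      = ((f a).reverse.take k).foldl (fun s b => h a (b, s)) (g a) := by
    intro a k
    induction k with
    | zero => simp
    | succ k ih =>
      rw [List.take_add_one, List.foldl_append, ← ih]
      cases hk : (f a).reverse[k]? <;> simp [hk]
  refine (nat_rec (list_length.comp hf) hg hstep).of_eq fun a => ?_
  rw [hiter, ← List.length_reverse, List.take_length, List.foldl_reverse]

theorem fin_apply {n : ℕ} {f : Fin n → α → σ} {i : α → Fin n}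
    (hf : ∀ k, Computable (f k)) (hi : Computable i) : Computable fun a => f (i a) a :=
  (vector_get.comp (vector_ofFn hf) hi).of_eq fun a => by simp

theorem fin_pi {n : ℕ} {f : Fin n → α → σ} (hf : ∀ k, Computable (f k)) :
    Computable fun a k => f k a :=
  (Primrec.vector_get'.to_comp.comp (vector_ofFn hf)).of_eq fun a => by funext k; simp

theorem fin_sum [AddCommMonoid σ] (hadd : Computable₂ ((· + ·) : σ → σ → σ)) :
    ∀ {n : ℕ} {f : Fin n → α → σ}, (∀ k, Computable (f k)) →
      Computable fun a => ∑ k, f k a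
  | 0, _, _ => (const 0).of_eq fun _ => by simp
  | _ + 1, f, hf => (hadd.comp (hf 0) (fin_sum hadd fun k => hf k.succ)).of_eq fun a => by
      rw [Fin.sum_univ_succ]

theorem decide_forall_fin :
    ∀ {n : ℕ} {p : Fin n → α → Prop} [∀ k, DecidablePred (p k)],
      (∀ k, Computable fun a => decide (p k a)) → Computable fun a => decide (∀ k, p k a)
  | 0, _, _, _ => (const true).of_eq fun _ => by simp
  | _ + 1, p, _, hp =>
    ((Primrec.dom_bool₂ (· && ·)).to_comp.comp (hp 0)
      (decide_forall_fin fun k => hp k.succ)).of_eq fun a => by simp [Fin.forall_fin_succ]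

end Computable

theorem rePred_exists_of_computable₂ {α κ : Type*} [Primcodable α] [Primcodable κ]
    {p : α → κ → Prop} [∀ a, DecidablePred (p a)]
    (hp : Computable₂ fun a k => decide (p a k)) : REPred fun a => ∃ k, p a k := by
  have hf : Computable₂ fun a n =>
      (Encodable.decode n : Option κ).bind fun k => bif decide (p a k) then some k else none :=
    Computable.option_bind (Computable.decode.comp Computable.snd)
      (Computable.cond (hp.comp (Computable.fst.comp Computable.fst) Computable.snd)
        (Computable.option_some.comp Computable.snd) (Computable.const none))
  refine (Partrec.rfindOpt hf).dom_re.of_eq fun a => Nat.rfindOpt_dom.trans ⟨?_, ?_⟩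
  · rintro ⟨n, k, hk⟩
    simp only [Option.mem_def, Option.bind_eq_some_iff, Bool.cond_decide] at hk
    obtain ⟨k', -, hk'⟩ := hk
    split_ifs at hk' with h
    exact ⟨k', h⟩
  · rintro ⟨k, hk⟩
    exact ⟨Encodable.encode k, k, by simp [hk]⟩

def strNum : BStr → ℕ
  | [] => 0
  | b :: t => cond b (2 ^ t.length) 0 + strNum t

lemma strVal_eq_strNum_div (s : BStr) : strVal s = strNum s / 2 ^ s.length := by
  induction s with
  | nil => simp [strVal, strNum]
  | cons b t ih =>
    rw [strVal, ih, strNum, List.length_cons, pow_succ]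
    cases b <;> simp <;> field_simp

open Primrec in
lemma primrec_strNum : Primrec strNum := by
  have hh : Primrec₂ fun (_ : BStr) (q : Bool × BStr × ℕ) =>
      cond q.1 (2 ^ q.2.1.length) 0 + q.2.2 :=
    nat_add.comp (cond (fst.comp snd)
        (primrec_two_pow.comp (list_length.comp (fst.comp (snd.comp snd)))) (const 0))
      (snd.comp (snd.comp snd))
  refine (list_rec Primrec.id (const 0) hh).of_eq fun s => ?_
  induction s with
  | nil => rfl
  | cons b t ih => simp only [id, strNum] at ih ⊢; rw [← ih]

/-- Decides `Int.fract (dyadicVal p x - V / 2 ^ n + 1 / 2 ^ (n + 1)) < 2 / 2 ^ n` in natural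
arithmetic (`fractTest_iff`): multiplying by `2 ^ p - 1 ≡ -1 (mod 2 ^ p)` replaces the
subtractions by additions. -/
def fractTest (p n : ℕ) (x : ℕ × ℕ) (V : ℕ) : Bool :=
  decide ((x.1 + 2 ^ (p - n - 1) + (2 ^ p - 1) * (x.2 + V * 2 ^ (p - n))) % 2 ^ p
    < 2 ^ (p - n + 1))

lemma fractTest_iff {p n : ℕ} (hpn : n + 1 ≤ p) (x : ℕ × ℕ) (V : ℕ) :
    fractTest p n x V = true ↔
      Int.fract (dyadicVal p x - V / 2 ^ n + 1 / 2 ^ (n + 1)) < 2 / 2 ^ n := by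
  obtain ⟨a, rfl⟩ : ∃ a, p = a + n + 1 := ⟨p - n - 1, by omega⟩
  rw [fractTest, show a + n + 1 - n - 1 = a by omega, show a + n + 1 - n + 1 = a + 2 by omega,
    show a + n + 1 - n = a + 1 by omega]
  set t : ℤ := x.1 + 2 ^ a - x.2 - V * 2 ^ (a + 1)
  have hreal : dyadicVal (a + n + 1) x - V / 2 ^ n + 1 / 2 ^ (n + 1)
      = (t : ℝ) / ((2 ^ (a + n + 1) : ℕ) : ℝ) := by
    simp only [dyadicVal, t]
    push_cast
    field_simp
    ring
  have hmod : (((x.1 + 2 ^ a + (2 ^ (a + n + 1) - 1) * (x.2 + V * 2 ^ (a + 1)))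
      % 2 ^ (a + n + 1) : ℕ) : ℤ) = t % (2 ^ (a + n + 1) : ℕ) := by
    rw [Int.natCast_mod, ← Int.add_mul_emod_self_left t _ (x.2 + V * 2 ^ (a + 1))]
    push_cast [Nat.cast_sub Nat.one_le_two_pow]
    congr 1
    ring
  rw [hreal, Int.fract_div_intCast_eq_div_intCast_mod, decide_eq_true_iff,
    ← Nat.cast_lt (α := ℤ), hmod, ← Int.cast_lt (R := ℝ),
    div_lt_div_iff₀ (by positivity) (by positivity)]
  push_cast
  rw [show (2 : ℝ) * 2 ^ (a + n + 1) = 2 ^ (a + 2) * 2 ^ n by ring]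
  exact (mul_lt_mul_iff_left₀ (by positivity)).symm

lemma computable_fractTest {γ : Type*} [Primcodable γ] {p n V : γ → ℕ} {x : γ → ℕ × ℕ}
    (hp : Computable p) (hn : Computable n) (hx : Computable x) (hV : Computable V) :
    Computable fun a => fractTest (p a) (n a) (x a) (V a) := by
  have add := Primrec.nat_add.to_comp
  have mul := Primrec.nat_mul.to_comp
  have sub := Primrec.nat_sub.to_comp
  have pow := primrec_two_pow.to_comp
  have hpn := sub.comp hp hn
  exact Primrec.nat_lt.decide.to_comp.comp
    (Primrec.nat_mod.to_comp.comp
      (add.comp (add.comp (Computable.fst.comp hx) (pow.comp (sub.comp hpn (Computable.const 1))))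
        (mul.comp (sub.comp (pow.comp hp) (Computable.const 1))
          (add.comp (Computable.snd.comp hx) (mul.comp hV (pow.comp hpn)))))
      (pow.comp hp))
    (pow.comp (add.comp hpn (Computable.const 1)))

lemma two_zpow_neg_natCast (n : ℕ) : (2 : ℝ) ^ (-(n : ℤ)) = 1 / 2 ^ n := by
  rw [zpow_neg, zpow_natCast, one_div]

lemma fractTest_of_mem_Ival {s : BStr} {n : ℕ} (hs : s.length = n) {x y : ℝ}
    (hx : Int.fract x ∈ Ival s) (hxy : |x - y| < 1 / 2 ^ (n + 1)) :
    Int.fract (y - strVal s + 1 / 2 ^ (n + 1)) < 2 / 2 ^ n := by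
  rw [Ival, hs, two_zpow_neg_natCast, Set.mem_Ico, Int.fract] at hx
  have hh : (1 : ℝ) / 2 ^ n = 2 * (1 / 2 ^ (n + 1)) := by rw [pow_succ]; ring
  have hh' : (2 : ℝ) / 2 ^ n = 2 * (1 / 2 ^ n) := by ring
  obtain ⟨hxy₁, hxy₂⟩ := abs_lt.1 hxy
  -- `⌊x⌋ ≤ ⌊u⌋` for the argument `u`, hence `Int.fract u ≤ u - ⌊x⌋`
  have hfloor : (⌊x⌋ : ℝ) ≤ ⌊y - strVal s + 1 / 2 ^ (n + 1)⌋ :=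
    Int.cast_le.2 (Int.le_floor.2 (by linarith))
  rw [Int.fract]
  linarith

lemma fract_mem_IvalHat_of_fractTest {s : BStr} {n : ℕ} (hs : s.length = n) {x y : ℝ}
    (hy : Int.fract (y - strVal s + 1 / 2 ^ (n + 1)) < 2 / 2 ^ n)
    (hxy : |x - y| ≤ 1 / 2 ^ (n + 1)) : Int.fract x ∈ IvalHat s := by
  set u := y - strVal s + 1 / 2 ^ (n + 1) with hu_def
  have hh : (1 : ℝ) / 2 ^ n = 2 * (1 / 2 ^ (n + 1)) := by rw [pow_succ]; ring
  have hh' : (2 : ℝ) / 2 ^ n = 2 * (1 / 2 ^ n) := by ring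
  have hu : 0 ≤ u - ⌊u⌋ := Int.fract_nonneg u
  rw [Int.fract] at hy
  obtain ⟨hxy₁, hxy₂⟩ := abs_le.1 hxy
  refine ⟨x - ⌊u⌋, Set.mem_Ico.2 ⟨?_, ?_⟩, Int.fract_sub_intCast x _⟩ <;>
    rw [hs, two_zpow_neg_natCast] <;> linarith

section Criterion

variable {N : ℕ} {κ : Type*} [Primcodable κ] (valid : ℕ → κ → Prop)
  [∀ n, DecidablePred (valid n)] (prec : ℕ → κ → ℕ) (num : ℕ → κ → Fin N → ℕ × ℕ)

def acceptedTuples : Set (Fin N → BStr) :=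
  {s | ∃ q : ℕ × κ, valid q.1 q.2 ∧ (∀ i, (s i).length = q.1) ∧
    ∀ i, fractTest (prec q.1 q.2) q.1 (num q.1 q.2 i) (strNum (s i)) = true}

variable {valid prec num}

open Computable in
lemma rePred_acceptedTuples (hvalid : Computable₂ fun n k => decide (valid n k))
    (hprec : Computable₂ prec) (hnum : Computable₂ num) :
    REPred (· ∈ acceptedTuples valid prec num) := by
  have hand := (Primrec.dom_bool₂ (· && ·)).to_comp
  have hn : Computable fun a : (Fin N → BStr) × (ℕ × κ) => a.2.1 := fst.comp snd
  have hk : Computable fun a : (Fin N → BStr) × (ℕ × κ) => a.2.2 := snd.comp snd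
  have hs : ∀ i, Computable fun a : (Fin N → BStr) × (ℕ × κ) => a.1 i :=
    fun i => fin_app.comp fst (const i)
  have hlen : Computable fun a : (Fin N → BStr) × (ℕ × κ) =>
      decide (∀ i, (a.1 i).length = a.2.1) :=
    decide_forall_fin fun i => Primrec.eq.decide.to_comp.comp (list_length.comp (hs i)) hn
  have htest : Computable fun a : (Fin N → BStr) × (ℕ × κ) => decide (∀ i,
      fractTest (prec a.2.1 a.2.2) a.2.1 (num a.2.1 a.2.2 i) (strNum (a.1 i)) = true) :=
    decide_forall_fin fun i => (computable_fractTest (hprec.comp hn hk) hn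
      (fin_app.comp (hnum.comp hn hk) (const i)) (primrec_strNum.to_comp.comp (hs i))).of_eq
      fun a => by simp
  have hcheck : Computable₂ fun (s : Fin N → BStr) (q : ℕ × κ) =>
      decide (valid q.1 q.2 ∧ (∀ i, (s i).length = q.1) ∧
        ∀ i, fractTest (prec q.1 q.2) q.1 (num q.1 q.2 i) (strNum (s i)) = true) :=
    (hand.comp (hvalid.comp hn hk) (hand.comp hlen htest)).of_eq fun a => by simp
  exact (rePred_exists_of_computable₂ hcheck).of_eq fun s => Iff.rfl

theorem REcond_of_computable_approx {F : Set (EuclideanSpace ℝ (Fin N))}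
    (z : κ → EuclideanSpace ℝ (Fin N)) (hvalid : Computable₂ fun n k => decide (valid n k))
    (hprec : Computable₂ prec) (hnum : Computable₂ num) (hprec_ge : ∀ n k, n + 1 ≤ prec n k)
    (happrox : ∀ n k i, |z k i - dyadicVal (prec n k) (num n k i)| ≤ 1 / 2 ^ (n + 3))
    (hdense : ∀ x ∈ F, ∀ n, ∃ k, valid n k ∧ dist x (z k) ≤ 1 / 2 ^ (n + 2))
    (hnear : ∀ n k, valid n k → ∃ x ∈ F, dist x (z k) ≤ 1 / 2 ^ (n + 2)) :
    REcond N F := by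
  have hclose : ∀ x n k i, dist x (z k) ≤ 1 / 2 ^ (n + 2) →
      |x i - dyadicVal (prec n k) (num n k i)| < 1 / 2 ^ (n + 1) := by
    intro x n k i hx
    have hi : |x i - z k i| ≤ 1 / 2 ^ (n + 2) := (PiLp.dist_apply_le x (z k) i).trans hx
    calc |x i - dyadicVal (prec n k) (num n k i)|
        ≤ |x i - z k i| + |z k i - dyadicVal (prec n k) (num n k i)| := abs_sub_le _ _ _
      _ ≤ 1 / 2 ^ (n + 2) + 1 / 2 ^ (n + 3) := add_le_add hi (happrox n k i)
      _ < 1 / 2 ^ (n + 1) := by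
        have : (0 : ℝ) < 1 / 2 ^ (n + 1) := by positivity
        linarith [show (1 : ℝ) / 2 ^ (n + 2) = 1 / 2 ^ (n + 1) / 2 by rw [pow_succ]; ring,
          show (1 : ℝ) / 2 ^ (n + 3) = 1 / 2 ^ (n + 1) / 4 by rw [pow_succ, pow_succ]; ring]
  have hstrVal : ∀ {s : BStr} {n}, s.length = n → strVal s = strNum s / 2 ^ n := by
    rintro s n rfl
    exact strVal_eq_strNum_div s
  refine ⟨acceptedTuples valid prec num, rePred_acceptedTuples hvalid hprec hnum, ?_, ?_⟩
  · rintro s ⟨hlen, x, hxF, hx⟩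
    obtain ⟨n, hn⟩ : ∃ n, ∀ i, (s i).length = n := by
      rcases isEmpty_or_nonempty (Fin N) with h | ⟨⟨i₀⟩⟩
      · exact ⟨0, fun i => h.elim i⟩
      · exact ⟨_, fun i => hlen i i₀⟩
    obtain ⟨k, hk, hxk⟩ := hdense x hxF n
    refine ⟨(n, k), hk, hn, fun i => (fractTest_iff (hprec_ge n k) _ _).2 ?_⟩
    rw [← hstrVal (hn i)]
    exact fractTest_of_mem_Ival (hn i) (hx i) (hclose x n k i hxk)
  · rintro s ⟨⟨n, k⟩, hk, hn, htest⟩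
    obtain ⟨x, hxF, hxk⟩ := hnear n k hk
    refine ⟨fun i j => (hn i).trans (hn j).symm, x, hxF, fun i => ?_⟩
    have htest := (fractTest_iff (hprec_ge n k) _ _).1 (htest i)
    rw [← hstrVal (hn i)] at htest
    exact fract_mem_IvalHat_of_fractTest (hn i) htest (hclose x n k i hxk).le

end Criterion

section Orbit

variable {X ι : Type*} {S : ι → X → X}

lemma foldr_mem {F : Set X} (hF : ∀ i, Set.MapsTo (S i) F F) {x : X} (hx : x ∈ F)
    (w : List ι) : w.foldr S x ∈ F := by
  induction w with
  | nil => exact hx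
  | cons i w ih => exact hF i ih

variable [PseudoMetricSpace X] {r : ℝ}

lemma dist_foldr_le (hS : ∀ i x y, dist (S i x) (S i y) ≤ r * dist x y) (hr : 0 ≤ r)
    (w : List ι) (x y : X) : dist (w.foldr S x) (w.foldr S y) ≤ r ^ w.length * dist x y := by
  induction w with
  | nil => simp
  | cons i w ih =>
    calc dist (S i (w.foldr S x)) (S i (w.foldr S y)) ≤ r * dist (w.foldr S x) (w.foldr S y) :=
          hS _ _ _
      _ ≤ r * (r ^ w.length * dist x y) := mul_le_mul_of_nonneg_left ih hr
      _ = r ^ (i :: w).length * dist x y := by rw [List.length_cons, pow_succ]; ring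

lemma exists_length_eq_dist_foldr_le (hS : ∀ i x y, dist (S i x) (S i y) ≤ r * dist x y)
    (hr : 0 ≤ r) {F : Set X} (hF : F ⊆ ⋃ i, S i '' F) (x₀ : X) {R : ℝ}
    (hR : ∀ x ∈ F, dist x x₀ ≤ R) (d : ℕ) :
    ∀ x ∈ F, ∃ w : List ι, w.length = d ∧ dist x (w.foldr S x₀) ≤ r ^ d * R := by
  induction d with
  | zero => exact fun x hx => ⟨[], rfl, by simpa using hR x hx⟩
  | succ d ih =>
    intro x hx
    obtain ⟨i, x', hx', rfl⟩ : ∃ i, ∃ x' ∈ F, S i x' = x := by simpa using hF hx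
    obtain ⟨w, hw, hdist⟩ := ih x' hx'
    refine ⟨i :: w, by simp [hw], ?_⟩
    calc dist (S i x') (S i (w.foldr S x₀)) ≤ r * dist x' (w.foldr S x₀) := hS _ _ _
      _ ≤ r * (r ^ d * R) := mul_le_mul_of_nonneg_left hdist hr
      _ = r ^ (d + 1) * R := by ring

lemma isBounded_range_foldr (hS : ∀ i x y, dist (S i x) (S i y) ≤ r * dist x y) (hr0 : 0 ≤ r)
    (hr1 : r ≤ 1) {F : Set X} (hF : ∀ i, Set.MapsTo (S i) F F) (hFb : Bornology.IsBounded F)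
    {y : X} (hy : y ∈ F) (x₀ : X) :
    Bornology.IsBounded (Set.range fun w : List ι => w.foldr S x₀) := by
  refine (hFb.cthickening (δ := dist x₀ y)).subset ?_
  rintro _ ⟨w, rfl⟩
  refine Metric.mem_cthickening_of_dist_le _ (w.foldr S y) _ _ (foldr_mem hF hy w) ?_
  calc dist (w.foldr S x₀) (w.foldr S y) ≤ r ^ w.length * dist x₀ y :=
        dist_foldr_le hS hr0 w _ _
    _ ≤ 1 * dist x₀ y := by gcongr; exact pow_le_one₀ hr0 hr1
    _ = dist x₀ y := one_mul _

lemma exists_computable_depth (hr0 : 0 ≤ r) (hr1 : r < 1) (R : ℝ) :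
    ∃ D : ℕ → ℕ, Computable D ∧ ∀ n d, D n ≤ d → r ^ d * R ≤ 1 / 2 ^ (n + 2) := by
  obtain ⟨b, hb⟩ := exists_pow_lt_of_lt_one (by norm_num : (0 : ℝ) < 1 / 2) hr1
  obtain ⟨a, ha⟩ := pow_unbounded_of_one_lt R (by norm_num : (1 : ℝ) < 2)
  refine ⟨fun n => b * (n + 2 + a), ?_, fun n d hd => ?_⟩
  · exact Primrec.nat_mul.to_comp.comp (Computable.const b)
      (Primrec.nat_add.to_comp.comp (Primrec.nat_add.to_comp.comp Computable.id
        (Computable.const 2)) (Computable.const a))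
  calc r ^ d * R ≤ r ^ d * 2 ^ a := mul_le_mul_of_nonneg_left ha.le (by positivity)
    _ ≤ (r ^ b) ^ (n + 2 + a) * 2 ^ a := by
        rw [← pow_mul]
        exact mul_le_mul_of_nonneg_right (pow_le_pow_of_le_one hr0 hr1.le hd) (by positivity)
    _ ≤ (1 / 2) ^ (n + 2 + a) * 2 ^ a := by gcongr
    _ = 1 / 2 ^ (n + 2) := by rw [div_pow, one_pow, pow_add]; field_simp

theorem exists_depth_foldr_approx (hS : ∀ i x y, dist (S i x) (S i y) ≤ r * dist x y)
    (hr0 : 0 ≤ r) (hr1 : r < 1) {F : Set X} (hsub : F ⊆ ⋃ i, S i '' F)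
    (hmaps : ∀ i, Set.MapsTo (S i) F F) (hFb : Bornology.IsBounded F) {y : X} (hy : y ∈ F)
    (x₀ : X) :
    ∃ D : ℕ → ℕ, Computable D ∧
      (∀ x ∈ F, ∀ n, ∃ w : List ι, D n ≤ w.length ∧
        dist x (w.foldr S x₀) ≤ 1 / 2 ^ (n + 2)) ∧
      ∀ n (w : List ι), D n ≤ w.length → ∃ x ∈ F, dist x (w.foldr S x₀) ≤ 1 / 2 ^ (n + 2) := by
  obtain ⟨R, hR⟩ := hFb.subset_closedBall x₀
  obtain ⟨D, hD, hDr⟩ := exists_computable_depth hr0 hr1 R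
  refine ⟨D, hD, fun x hx n => ?_, fun n w hw => ?_⟩
  · obtain ⟨w, hw, hdist⟩ :=
      exists_length_eq_dist_foldr_le hS hr0 hsub x₀ (fun x hx => hR hx) (D n) x hx
    exact ⟨w, hw.ge, hdist.trans (hDr n _ le_rfl)⟩
  · refine ⟨w.foldr S y, foldr_mem hmaps hy w, ?_⟩
    calc dist (w.foldr S y) (w.foldr S x₀) ≤ r ^ w.length * dist y x₀ :=
          dist_foldr_le hS hr0 w _ _
      _ ≤ r ^ w.length * R := mul_le_mul_of_nonneg_left (hR hy) (by positivity)
      _ ≤ 1 / 2 ^ (n + 2) := hDr n _ hw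

end Orbit

lemma abs_affine_sub_le {N : ℕ} {a a' x x' : Fin N → ℝ} {b b' ε E B G : ℝ}
    (ha : ∀ k, |a k - a' k| ≤ ε) (hε : ε ≤ 1) (hB : ∀ k, |a k| ≤ B)
    (hx : ∀ k, |x' k - x k| ≤ E) (hG : ∀ k, |x k| ≤ G) (hb : |b - b'| ≤ ε) :
    |(∑ k, a' k * x' k + b') - (∑ k, a k * x k + b)| ≤ N * ((B + 1) * E + ε * G) + ε := by
  have hterm : ∀ k, |a' k * x' k - a k * x k| ≤ (B + 1) * E + ε * G := fun k => by
    have ha' : |a' k| ≤ B + 1 := by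
      have := abs_sub_abs_le_abs_sub (a' k) (a k)
      rw [abs_sub_comm] at this
      linarith [ha k, hB k]
    calc |a' k * x' k - a k * x k| = |a' k * (x' k - x k) + (a' k - a k) * x k| := by ring_nf
      _ ≤ |a' k| * |x' k - x k| + |a' k - a k| * |x k| := by
        rw [← abs_mul, ← abs_mul]; exact abs_add_le _ _
      _ ≤ (B + 1) * E + ε * G :=
        add_le_add (mul_le_mul ha' (hx k) (abs_nonneg _) ((abs_nonneg _).trans ha'))
          (mul_le_mul (abs_sub_comm (a k) _ ▸ ha k) (hG k) (abs_nonneg _)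
            ((abs_nonneg _).trans (ha k)))
  calc |(∑ k, a' k * x' k + b') - (∑ k, a k * x k + b)|
      = |∑ k, (a' k * x' k - a k * x k) + (b' - b)| := by rw [Finset.sum_sub_distrib]; ring_nf
    _ ≤ ∑ k, |a' k * x' k - a k * x k| + |b' - b| :=
        (abs_add_le _ _).trans (add_le_add (Finset.abs_sum_le_sum_abs _ _) le_rfl)
    _ ≤ ∑ _k : Fin N, ((B + 1) * E + ε * G) + ε := by
        rw [abs_sub_comm]
        exact add_le_add (Finset.sum_le_sum fun k _ => hterm k) hb
    _ = N * ((B + 1) * E + ε * G) + ε := by simp [mul_add]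

section Machine

variable {m N : ℕ} (AM : Fin m → Fin N → Fin N → ℕ → ℕ × ℕ)
  (Av : Fin m → Fin N → ℕ → ℕ × ℕ)

/-- The products of precision-`p` values have precision `2 p`; the constant term is lifted to
precision `2 p` by the factor `(2 ^ p, 0)` before truncating back to precision `p`. -/
def approxStep (p : ℕ) (i : Fin m) (y : Fin N → ℕ × ℕ) : Fin N → ℕ × ℕ := fun j =>
  dyadicShift p (∑ k, dyadicMul (AM i j k p) (y k) + dyadicMul (Av i j p) (2 ^ p, 0))

def approxOrbit (p : ℕ) (w : List (Fin m)) : Fin N → ℕ × ℕ :=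
  w.foldr (approxStep AM Av p) 0

variable {AM Av}

open Computable in
lemma computable_approxOrbit (hAM : ∀ i j k, Computable (AM i j k))
    (hAv : ∀ i j, Computable (Av i j)) : Computable₂ (approxOrbit AM Av) := by
  have hstep : Computable fun q : ℕ × Fin m × (Fin N → ℕ × ℕ) =>
      approxStep AM Av q.1 q.2.1 q.2.2 := by
    have hp : Computable fun q : ℕ × Fin m × (Fin N → ℕ × ℕ) => q.1 := fst
    have hi : Computable fun q : ℕ × Fin m × (Fin N → ℕ × ℕ) => q.2.1 := fst.comp snd
    have hy : Computable fun q : ℕ × Fin m × (Fin N → ℕ × ℕ) => q.2.2 := snd.comp snd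
    refine fin_pi fun j => primrec_dyadicShift.to_comp.comp hp
      (primrec_prod_add.to_comp.comp ?_ ?_)
    · exact fin_sum primrec_prod_add.to_comp fun k => primrec_dyadicMul.to_comp.comp
        (fin_apply (fun i => (hAM i j k).comp hp) hi) (fin_app.comp hy (const k))
    · exact primrec_dyadicMul.to_comp.comp (fin_apply (fun i => (hAv i j).comp hp) hi)
        ((primrec_two_pow.to_comp.comp hp).pair (const 0))
  exact list_foldr snd (const 0) (hstep.comp ((fst.comp fst).pair snd)).to₂

lemma abs_dyadicVal_approxStep_sub_le (p : ℕ) (i : Fin m) (y : Fin N → ℕ × ℕ) (j : Fin N) :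
    |dyadicVal p (approxStep AM Av p i y j) -
      (∑ k, dyadicVal p (AM i j k p) * dyadicVal p (y k) + dyadicVal p (Av i j p))|
      ≤ 1 / 2 ^ p := by
  have h := abs_dyadicVal_dyadicShift_sub_le p p
    (∑ k, dyadicMul (AM i j k p) (y k) + dyadicMul (Av i j p) (2 ^ p, 0))
  rwa [dyadicVal_add, dyadicVal_sum, dyadicVal_dyadicMul, dyadicVal_two_pow, mul_one,
    Finset.sum_congr rfl fun k _ => dyadicVal_dyadicMul p p _ _] at h

lemma abs_dyadicVal_approxOrbit_sub_le {M : Fin m → Fin N → Fin N → ℝ}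
    {v : Fin m → Fin N → ℝ} {S : Fin m → EuclideanSpace ℝ (Fin N) → EuclideanSpace ℝ (Fin N)}
    (hAffine : ∀ i x j, S i x j = (∑ k, M i j k * x k) + v i j)
    (hAM : ∀ i j k p, |M i j k - dyadicVal p (AM i j k p)| ≤ 1 / 2 ^ p)
    (hAv : ∀ i j p, |v i j - dyadicVal p (Av i j p)| ≤ 1 / 2 ^ p)
    {B G : ℕ} (hB : ∀ i j k, |M i j k| ≤ B)
    (hG : ∀ (w : List (Fin m)) j, |w.foldr S 0 j| ≤ G) (p : ℕ) (w : List (Fin m)) (j : Fin N) :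
    |dyadicVal p (approxOrbit AM Av p w j) - w.foldr S 0 j|
      ≤ ((N * (B + 1) + N * G + 2 : ℕ) : ℝ) ^ (w.length + 1) / 2 ^ p := by
  set Q : ℕ := N * (B + 1) + N * G + 2
  induction w generalizing j with
  | nil => simp [approxOrbit, dyadicVal]; positivity
  | cons i w ih =>
    have hε : (1 : ℝ) / 2 ^ p ≤ 1 := by
      rw [div_le_one (by positivity)]; exact one_le_pow₀ (by norm_num)
    have hstep := abs_affine_sub_le (fun k => hAM i j k p) hε (hB i j) ih (hG w) (hAv i j p)
    rw [← hAffine] at hstep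
    have herr := (abs_sub_le _ _ _).trans
      (add_le_add (abs_dyadicVal_approxStep_sub_le p i _ j) hstep)
    have hQ : (1 : ℝ) ≤ (Q : ℝ) ^ (w.length + 1) := one_le_pow₀ (Nat.one_le_cast.2 (by omega))
    have hQ' : (Q : ℝ) = N * (B + 1) + N * G + 2 := by push_cast [Q]; ring
    refine herr.trans (le_of_eq_of_le (by ring :
      _ = (N * (B + 1) * (Q : ℝ) ^ (w.length + 1) + (N * G + 2)) / 2 ^ p) ?_)
    rw [List.length_cons, pow_succ _ (w.length + 1)]
    refine div_le_div_of_nonneg_right ?_ (by positivity)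
    generalize (Q : ℝ) ^ (w.length + 1) = q at hQ ⊢
    rw [hQ']
    nlinarith [mul_le_mul_of_nonneg_left hQ (show (0 : ℝ) ≤ N * G + 2 by positivity)]

end Machine

lemma pow_div_two_pow_mul_add_le (Q d n : ℕ) : (Q : ℝ) ^ d / 2 ^ (Q * d + n) ≤ 1 / 2 ^ n := by
  have hQ : (Q : ℝ) ^ d ≤ 2 ^ (Q * d) := by
    rw [pow_mul]
    exact pow_le_pow_left₀ (Nat.cast_nonneg Q) (by exact_mod_cast Nat.lt_two_pow_self.le) d
  rw [div_le_div_iff₀ (by positivity) (by positivity), one_mul, pow_add]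
  exact mul_le_mul_of_nonneg_right hQ (by positivity)

theorem exists_computable_approx_foldr {m N : ℕ} {M : Fin m → Fin N → Fin N → ℝ}
    {v : Fin m → Fin N → ℝ} {S : Fin m → EuclideanSpace ℝ (Fin N) → EuclideanSpace ℝ (Fin N)}
    (hAffine : ∀ i x j, S i x j = (∑ k, M i j k * x k) + v i j)
    (hMc : ∀ i j k, ComputableReal (M i j k)) (hvc : ∀ i j, ComputableReal (v i j))
    (hbdd : Bornology.IsBounded (Set.range fun w : List (Fin m) => w.foldr S 0)) :
    ∃ (prec : ℕ → List (Fin m) → ℕ) (num : ℕ → List (Fin m) → Fin N → ℕ × ℕ),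
      Computable₂ prec ∧ Computable₂ num ∧ (∀ n w, n + 1 ≤ prec n w) ∧
      ∀ n w j, |w.foldr S 0 j - dyadicVal (prec n w) (num n w j)| ≤ 1 / 2 ^ (n + 3) := by
  choose AM hAMc hAM using fun i j k => (hMc i j k).exists_dyadic_approx
  choose Av hAvc hAv using fun i j => (hvc i j).exists_dyadic_approx
  obtain ⟨B, hB⟩ : ∃ B : ℕ, ∀ i j k, |M i j k| ≤ B := by
    obtain ⟨B, hB⟩ := Finite.exists_le fun q : Fin m × Fin N × Fin N => |M q.1 q.2.1 q.2.2|
    obtain ⟨B', hB'⟩ := exists_nat_ge B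
    exact ⟨B', fun i j k => (hB (i, j, k)).trans hB'⟩
  obtain ⟨G, hG⟩ : ∃ G : ℕ, ∀ (w : List (Fin m)) j, |w.foldr S 0 j| ≤ G := by
    obtain ⟨C, hC⟩ := hbdd.exists_norm_le
    obtain ⟨G, hG⟩ := exists_nat_ge C
    exact ⟨G, fun w j => ((PiLp.norm_apply_le _ j).trans (hC _ ⟨w, rfl⟩)).trans hG⟩
  set Q := N * (B + 1) + N * G + 2
  -- precision `Q (|w| + 1) + n + 3` absorbs the error growth `Q ^ (|w| + 1)` along the word
  have hprec : Computable₂ fun n (w : List (Fin m)) => Q * (w.length + 1) + n + 3 :=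
    open Computable in
    Primrec.nat_add.to_comp.comp (Primrec.nat_add.to_comp.comp
      (Primrec.nat_mul.to_comp.comp (const Q) (succ.comp (list_length.comp snd))) fst) (const 3)
  refine ⟨_, fun n w => approxOrbit AM Av (Q * (w.length + 1) + n + 3) w, hprec,
    (computable_approxOrbit hAMc hAvc).comp hprec Computable.snd, fun n w => by omega,
    fun n w j => ?_⟩
  rw [abs_sub_comm]
  calc _ ≤ (Q : ℝ) ^ (w.length + 1) / 2 ^ (Q * (w.length + 1) + n + 3) :=
        abs_dyadicVal_approxOrbit_sub_le hAffine hAM hAv hB hG _ w j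
    _ ≤ 1 / 2 ^ (n + 3) := by
        rw [add_assoc]
        exact pow_div_two_pow_mul_add_le Q _ _

theorem recond_of_computable_contractions_general
    (N : ℕ) (m : ℕ)
    (M : Fin m → Fin N → Fin N → ℝ) (v : Fin m → Fin N → ℝ) (c : Fin m → ℝ)
    (hc : ∀ i, c i ∈ Set.Ioo (0 : ℝ) 1)
    (S : Fin m → EuclideanSpace ℝ (Fin N) → EuclideanSpace ℝ (Fin N))
    (hAffine : ∀ i x j, S i x j = (∑ k, M i j k * x k) + v i j)
    (hContr : ∀ i x y, dist (S i x) (S i y) ≤ c i * dist x y)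
    (hMc : ∀ i j k, ComputableReal (M i j k)) (hvc : ∀ i j, ComputableReal (v i j))
    (F : Set (EuclideanSpace ℝ (Fin N))) (hFne : F.Nonempty) (hFc : IsCompact F)
    (hFinv : F = ⋃ i, S i '' F) :
    REcond N F := by
  obtain ⟨y, hy⟩ := hFne
  have : Nonempty (Fin m) := by
    obtain ⟨i, -⟩ := Set.mem_iUnion.1 (hFinv.le hy)
    exact ⟨i⟩
  obtain ⟨i₀, hi₀⟩ := Finite.exists_max c
  obtain ⟨hr0, hr1⟩ := hc i₀
  have hS : ∀ i x y, dist (S i x) (S i y) ≤ c i₀ * dist x y := fun i x y =>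
    (hContr i x y).trans (mul_le_mul_of_nonneg_right (hi₀ i) dist_nonneg)
  have hmaps : ∀ i, Set.MapsTo (S i) F F := fun i =>
    Set.mapsTo_iff_image_subset.2 ((Set.subset_iUnion (fun i => S i '' F) i).trans hFinv.ge)
  obtain ⟨D, hD, hdense, hnear⟩ :=
    exists_depth_foldr_approx hS hr0.le hr1 hFinv.le hmaps hFc.isBounded hy 0
  obtain ⟨prec, num, hprec, hnum, hprec_ge, happrox⟩ := exists_computable_approx_foldr hAffine
    hMc hvc (isBounded_range_foldr hS hr0.le hr1.le hmaps hFc.isBounded hy 0)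
  exact REcond_of_computable_approx (fun w : List (Fin m) => w.foldr S 0)
    (valid := fun n w => D n ≤ w.length)
    (Primrec.nat_le.decide.to_comp.comp (hD.comp Computable.fst)
      (Computable.list_length.comp Computable.snd))
    hprec hnum hprec_ge happrox hdense hnear

/-- The invariant set of finitely many affine contractions on
`ℝ^N` with computable coefficients satisfies the r.e. condition. -/
theorem recond_of_computable_contractions
    (N : ℕ) (hN : 0 < N) (m : ℕ) (hm : 0 < m)
    (M : Fin m → Fin N → Fin N → ℝ) (v : Fin m → Fin N → ℝ) (c : Fin m → ℝ)
    (hc : ∀ i, c i ∈ Set.Ioo (0 : ℝ) 1)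
    (S : Fin m → EuclideanSpace ℝ (Fin N) → EuclideanSpace ℝ (Fin N))
    (hAffine : ∀ i x j, S i x j = (∑ k, M i j k * x k) + v i j)
    (hContr : ∀ i x y, dist (S i x) (S i y) ≤ c i * dist x y)
    (hMc : ∀ i j k, ComputableReal (M i j k)) (hvc : ∀ i j, ComputableReal (v i j))
    (F : Set (EuclideanSpace ℝ (Fin N))) (hFne : F.Nonempty) (hFc : IsCompact F)
    (hFinv : F = ⋃ i, S i '' F) :
    REcond N F :=
  recond_of_computable_contractions_general N m M v c hc S hAffine hContr hMc hvc F hFne hFc hFinv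
end
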